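/- arXiv:2409.18909 — 7 statements merged into one kernel-verified Lean document; each statement's English description precedes it below -/
import Mathlib

section
/- For all μ, μ' ∈ I, kl(μ, μ') ≥ (μ − μ')²/(2V). -/
/-!
On the open interval `interior Θ`, put `G t = 2V (b θ' - b t - b' t (θ' - t)) - (b' t - b' θ')²`,
so that `G θ' = 0` and `G' t = 2 b'' t (V (t - θ') - (b' t - b' θ'))`. Since `0 ≤ b'' ≤ V`, the
map `b'` is `V`-Lipschitz, hence `G'` has the sign of `t - θ'` and `G` is minimal at `θ'`.
Thus `G θ ≥ 0`, which is the claim multiplied by `2V`.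
-/

open MeasureTheory Real Set

theorem Convex.isMinOn_of_hasDerivAt_of_sub_mul_nonneg {S : Set ℝ} (hS : Convex ℝ S)
    {f f' : ℝ → ℝ} {a : ℝ} (ha : a ∈ S) (hf : ∀ x ∈ S, HasDerivAt f (f' x) x)
    (hsign : ∀ x ∈ S, 0 ≤ (x - a) * f' x) : IsMinOn f S a := by
  intro x hx
  have hcont : ∀ {s}, s ⊆ S → ContinuousOn f s := fun hs y hy =>
    (hf y (hs hy)).continuousAt.continuousWithinAt
  rcases le_total a x with hax | hxa
  · have hsub : Icc a x ⊆ S := hS.ordConnected.out ha hx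
    refine monotoneOn_of_hasDerivWithinAt_nonneg (convex_Icc a x) (hcont hsub)
      (fun y hy => (hf y (hsub (interior_subset hy))).hasDerivWithinAt) (fun y hy => ?_)
      (left_mem_Icc.2 hax) (right_mem_Icc.2 hax) hax
    rw [interior_Icc] at hy
    exact nonneg_of_mul_nonneg_right (hsign y (hsub (Ioo_subset_Icc_self hy))) (sub_pos.2 hy.1)
  · have hsub : Icc x a ⊆ S := hS.ordConnected.out hx ha
    refine antitoneOn_of_hasDerivWithinAt_nonpos (convex_Icc x a) (hcont hsub)
      (fun y hy => (hf y (hsub (interior_subset hy))).hasDerivWithinAt) (fun y hy => ?_)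
      (left_mem_Icc.2 hxa) (right_mem_Icc.2 hxa) hxa
    rw [interior_Icc] at hy
    exact nonpos_of_mul_nonneg_right (hsign y (hsub (Ioo_subset_Icc_self hy))) (sub_neg.2 hy.2)

theorem Convex.sq_sub_deriv_le_two_mul_bregman {S : Set ℝ} (hS : Convex ℝ S)
    {b b' b'' : ℝ → ℝ} {V : ℝ} (hb' : ∀ θ ∈ S, HasDerivAt b (b' θ) θ)
    (hb'' : ∀ θ ∈ S, HasDerivAt b' (b'' θ) θ) (hb''_nonneg : ∀ θ ∈ S, 0 ≤ b'' θ)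
    (hb''_le : ∀ θ ∈ S, b'' θ ≤ V) {θ θ' : ℝ} (hθ : θ ∈ S) (hθ' : θ' ∈ S) :
    (b' θ - b' θ') ^ 2 ≤ 2 * V * (b θ' - b θ - b' θ * (θ' - θ)) := by
  set G : ℝ → ℝ := fun t => 2 * V * (b θ' - b t - b' t * (θ' - t)) - (b' t - b' θ') ^ 2
  have hG : ∀ t ∈ S, HasDerivAt G (2 * b'' t * (V * (t - θ') - (b' t - b' θ'))) t := by
    intro t ht
    have := ((((hasDerivAt_const t (b θ')).sub (hb' t ht)).sub
      ((hb'' t ht).mul ((hasDerivAt_id' t).const_sub θ'))).const_mul (2 * V)).sub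
      (((hb'' t ht).sub_const (b' θ')).pow 2)
    exact this.congr_deriv (by ring)
  have hsign : ∀ t ∈ S, 0 ≤ (t - θ') * (2 * b'' t * (V * (t - θ') - (b' t - b' θ'))) := by
    intro t ht
    have hlip : |b' t - b' θ'| ≤ V * |t - θ'| := by
      simpa only [Real.norm_eq_abs] using hS.norm_image_sub_le_of_norm_hasDerivWithin_le
        (fun s hs => (hb'' s hs).hasDerivWithinAt)
        (fun s hs => (abs_of_nonneg (hb''_nonneg s hs)).trans_le (hb''_le s hs)) hθ' ht
    have hprod : (t - θ') * (b' t - b' θ') ≤ V * (t - θ') ^ 2 :=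
      calc (t - θ') * (b' t - b' θ') ≤ |t - θ'| * |b' t - b' θ'| := by
            rw [← abs_mul]; exact le_abs_self _
        _ ≤ |t - θ'| * (V * |t - θ'|) := by gcongr
        _ = V * (t - θ') ^ 2 := by rw [← sq_abs (t - θ')]; ring
    have hrw : (t - θ') * (2 * b'' t * (V * (t - θ') - (b' t - b' θ')))
        = 2 * b'' t * (V * (t - θ') ^ 2 - (t - θ') * (b' t - b' θ')) := by ring
    rw [hrw]
    exact mul_nonneg (mul_nonneg zero_le_two (hb''_nonneg t ht)) (sub_nonneg.2 hprod)
  have hmin := hS.isMinOn_of_hasDerivAt_of_sub_mul_nonneg hθ' hG hsign hθ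
  simp only [G, mem_ofPred_eq, sub_self, mul_zero] at hmin
  linarith

theorem kl_ge_sq_div_two_var_general
    (ρ : Measure ℝ)
    (Θ : Set ℝ) (hΘ : Θ = {θ : ℝ | Integrable (fun x => exp (θ * x)) ρ})
    (b b' b'' : ℝ → ℝ)
    (hb' : ∀ θ ∈ interior Θ, HasDerivAt b (b' θ) θ)
    (hb'' : ∀ θ ∈ interior Θ, HasDerivAt b' (b'' θ) θ)
    (hbpos : ∀ θ ∈ interior Θ, 0 < b'' θ)
    (Iset : Set ℝ) (hI : Iset = b' '' (interior Θ))
    (kl : ℝ → ℝ → ℝ)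
    (hkl : ∀ θ ∈ interior Θ, ∀ θ' ∈ interior Θ,
      kl (b' θ) (b' θ') = b θ' - b θ - b' θ * (θ' - θ))
    (V : ℝ) (hV : 0 < V) (hbV : ∀ θ ∈ interior Θ, b'' θ ≤ V) :
    ∀ μ ∈ Iset, ∀ μ' ∈ Iset, (μ - μ') ^ 2 / (2 * V) ≤ kl μ μ' := by
  have hconv : Convex ℝ (interior Θ) := by
    subst hΘ
    exact (ProbabilityTheory.convex_integrableExpSet (X := id) (μ := ρ)).interior
  subst hI
  rintro _ ⟨θ, hθ, rfl⟩ _ ⟨θ', hθ', rfl⟩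
  rw [hkl θ hθ θ' hθ', div_le_iff₀ (by positivity)]
  have := hconv.sq_sub_deriv_le_two_mul_bregman hb' hb'' (fun t ht => (hbpos t ht).le) hbV hθ hθ'
  linarith

/-- For all `μ, μ' ∈ I`, `kl μ μ' ≥ (μ - μ')² / (2V)`. -/
theorem kl_ge_sq_div_two_var
    (ρ : Measure ℝ) [SigmaFinite ρ]
    (Θ : Set ℝ) (hΘ : Θ = {θ : ℝ | Integrable (fun x => exp (θ * x)) ρ})
    (b b' b'' : ℝ → ℝ)
    (hb : ∀ θ ∈ Θ, b θ = log (∫ x, exp (θ * x) ∂ρ))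
    (hb' : ∀ θ ∈ interior Θ, HasDerivAt b (b' θ) θ)
    (hb'' : ∀ θ ∈ interior Θ, HasDerivAt b' (b'' θ) θ)
    (hbpos : ∀ θ ∈ interior Θ, 0 < b'' θ)
    (Iset : Set ℝ) (hI : Iset = b' '' (interior Θ))
    (kl : ℝ → ℝ → ℝ)
    (hkl : ∀ θ ∈ interior Θ, ∀ θ' ∈ interior Θ,
      kl (b' θ) (b' θ') = b θ' - b θ - b' θ * (θ' - θ))
    (V : ℝ) (hV : 0 < V) (hbV : ∀ θ ∈ interior Θ, b'' θ ≤ V) :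
    ∀ μ ∈ Iset, ∀ μ' ∈ Iset, (μ - μ') ^ 2 / (2 * V) ≤ kl μ μ' :=
  kl_ge_sq_div_two_var_general ρ Θ hΘ b b' b'' hb' hb'' hbpos Iset hI kl hkl V hV hbV
end

section
/- Let N₁ ≤ N₂ be positive integers and let x ∈ I with x ≤ μ. Then P(∃ n with N₁ ≤ n ≤ N₂ such that μ̂_n ≤ x) ≤ exp(−N₁ · kl(x, μ)), and also P(∃ n with N₁ ≤ n ≤ N₂ such that μ̂_n ≤ x) ≤ exp(−N₁ (x − μ)²/(2V)). -/
open MeasureTheory Real Set ProbabilityTheory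

/-
Take `θₓ` with `b' θₓ = x`; then `θₓ ≤ θ` since `b'` is increasing. The likelihood ratio
`dν_{θₓ}/dν_θ` has `ν_θ`-mean one, so its products along `X₁, …, Xₙ` form a nonnegative
martingale. On the event `μ̂ₙ ≤ x` the `n`-th product is at least `exp (n · kl x μ)`, so Doob's
maximal inequality bounds the probability by `exp (-N₁ · kl x μ)`. The second bound follows from
`kl x μ ≥ (x - μ)² / (2V)`, obtained by integrating `b'' ≤ V` twice.
-/

section Deriv

variable {D : Set ℝ} {f f' f'' : ℝ → ℝ}

theorem monotoneOn_of_hasDerivAt_nonneg (hD : Convex ℝ D) (hf : ∀ u ∈ D, HasDerivAt f (f' u) u)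
    (hf'_nonneg : ∀ u ∈ D, 0 ≤ f' u) : MonotoneOn f D :=
  monotoneOn_of_hasDerivWithinAt_nonneg hD (fun u hu => (hf u hu).continuousAt.continuousWithinAt)
    (fun u hu => (hf u (interior_subset hu)).hasDerivWithinAt)
    (fun u hu => hf'_nonneg u (interior_subset hu))

theorem strictMonoOn_of_hasDerivAt_pos (hD : Convex ℝ D) (hf : ∀ u ∈ D, HasDerivAt f (f' u) u)
    (hf'_pos : ∀ u ∈ D, 0 < f' u) : StrictMonoOn f D :=
  strictMonoOn_of_hasDerivWithinAt_pos hD (fun u hu => (hf u hu).continuousAt.continuousWithinAt)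
    (fun u hu => (hf u (interior_subset hu)).hasDerivWithinAt)
    (fun u hu => hf'_pos u (interior_subset hu))

theorem sq_deriv_sub_div_le_of_deriv2_le (hD : Convex ℝ D) {V : ℝ} (hV : 0 < V)
    (hf : ∀ u ∈ D, HasDerivAt f (f' u) u) (hf' : ∀ u ∈ D, HasDerivAt f' (f'' u) u)
    (hf''_nonneg : ∀ u ∈ D, 0 ≤ f'' u) (hf''_le : ∀ u ∈ D, f'' u ≤ V) {a c : ℝ} (ha : a ∈ D)
    (hc : c ∈ D) (hac : a ≤ c) :
    (f' c - f' a) ^ 2 / (2 * V) ≤ f c - f a - f' a * (c - a) := by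
  have hIcc : Icc a c ⊆ D := hD.ordConnected.out ha hc
  have hf'_mono : MonotoneOn f' D := monotoneOn_of_hasDerivAt_nonneg hD hf' hf''_nonneg
  set G := fun s => f s - f a - f' a * (s - a) - (f' s - f' a) ^ 2 / (2 * V)
  have hG : ∀ u ∈ Icc a c, HasDerivAt G ((f' u - f' a) * (1 - f'' u / V)) u := fun u hu => by
    have hu := hIcc hu
    refine ((((hf u hu).sub_const (f a)).sub
      (((hasDerivAt_id u).sub_const a).const_mul (f' a))).sub
      ((((hf' u hu).sub_const (f' a)).pow 2).div_const (2 * V))).congr_deriv ?_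
    field_simp
    ring
  have hG_mono : MonotoneOn G (Icc a c) := monotoneOn_of_hasDerivAt_nonneg (convex_Icc a c) hG
    fun u hu => mul_nonneg (sub_nonneg.2 (hf'_mono ha (hIcc hu) hu.1))
      (sub_nonneg.2 ((div_le_one hV).2 (hf''_le u (hIcc hu))))
  have := hG_mono (left_mem_Icc.2 hac) (right_mem_Icc.2 hac) hac
  simp only [G, sub_self, mul_zero, ne_eq, OfNat.ofNat_ne_zero, not_false_eq_true, zero_pow,
    zero_div] at this
  linarith

end Deriv

section LikelihoodRatio

variable {b : ℝ → ℝ} {θ θ' : ℝ}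

/-- The density `dν_{θ'} / dν_θ`. -/
noncomputable def likelihoodRatio (b : ℝ → ℝ) (θ θ' y : ℝ) : ℝ := exp ((θ' - θ) * y - (b θ' - b θ))

theorem measurable_likelihoodRatio : Measurable (likelihoodRatio b θ θ') := by
  unfold likelihoodRatio; fun_prop

theorem likelihoodRatio_nonneg : 0 ≤ likelihoodRatio b θ θ' := fun _ => (exp_pos _).le

theorem exp_mul_sub_mul_likelihoodRatio (y : ℝ) :
    exp (θ * y - b θ) * likelihoodRatio b θ θ' y = exp (θ' * y - b θ') := by
  rw [likelihoodRatio, ← exp_add]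
  ring_nf

theorem exp_mul_le_prod_likelihoodRatio {x : ℝ} (hθ : θ' ≤ θ)
    (hK : 0 ≤ b θ - b θ' - x * (θ - θ')) {m n : ℕ} (hmn : m ≤ n) (hn : 0 < n) {y : ℕ → ℝ}
    (hy : (∑ i ∈ Finset.range n, y i) / n ≤ x) :
    exp (m * (b θ - b θ' - x * (θ - θ'))) ≤
      ∏ i ∈ Finset.range n, likelihoodRatio b θ θ' (y i) := by
  rw [div_le_iff₀ (Nat.cast_pos.2 hn)] at hy
  have hmn : (m : ℝ) ≤ n := Nat.cast_le.2 hmn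
  simp only [likelihoodRatio]
  rw [← exp_sum, exp_le_exp, Finset.sum_sub_distrib, ← Finset.mul_sum, Finset.sum_const,
    Finset.card_range, nsmul_eq_mul]
  nlinarith [mul_le_mul_of_nonneg_right hmn hK]

variable {ρ : Measure ℝ}

theorem integrable_likelihoodRatio (hθ' : Integrable (fun y => exp (θ' * y)) ρ) :
    Integrable (likelihoodRatio b θ θ')
      (ρ.withDensity fun y => ENNReal.ofReal (exp (θ * y - b θ))) := by
  rw [integrable_withDensity_iff (by fun_prop) (.of_forall fun _ => ENNReal.ofReal_lt_top)]
  simp_rw [ENNReal.toReal_ofReal (exp_pos _).le, mul_comm (likelihoodRatio _ _ _ _),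
    exp_mul_sub_mul_likelihoodRatio, exp_sub]
  exact hθ'.div_const _

theorem integral_likelihoodRatio [NeZero ρ] (hθ' : Integrable (fun y => exp (θ' * y)) ρ)
    (hb : b θ' = log (∫ y, exp (θ' * y) ∂ρ)) :
    ∫ y, likelihoodRatio b θ θ' y ∂(ρ.withDensity fun y => ENNReal.ofReal (exp (θ * y - b θ))) =
      1 := by
  rw [integral_withDensity_eq_integral_toReal_smul (by fun_prop)
    (.of_forall fun _ => ENNReal.ofReal_lt_top)]
  simp_rw [ENNReal.toReal_ofReal (exp_pos _).le, smul_eq_mul, exp_mul_sub_mul_likelihoodRatio,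
    exp_sub, integral_div, hb, exp_log (integral_exp_pos hθ')]
  exact div_self (integral_exp_pos hθ').ne'

end LikelihoodRatio

theorem MeasureTheory.Submartingale.measure_exists_le_le {Ω : Type*} {mΩ : MeasurableSpace Ω}
    {P : Measure Ω} [IsFiniteMeasure P] {ℱ : Filtration ℕ mΩ} {F : ℕ → Ω → ℝ}
    (hF : Submartingale F ℱ P) (hF_nonneg : 0 ≤ F) {c : ℝ} (hc : 0 < c) (n : ℕ) :
    P {ω | ∃ k ≤ n, c ≤ F k ω} ≤ ENNReal.ofReal ((∫ ω, F n ω ∂P) / c) := by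
  have hdoob := maximal_ineq hF hF_nonneg (ε := ⟨c, hc.le⟩) n
  have hset : {ω | ∃ k ≤ n, c ≤ F k ω} =
      {ω | c ≤ (Finset.range (n + 1)).sup' Finset.nonempty_range_add_one fun k => F k ω} := by
    ext ω
    simp [Finset.le_sup'_iff]
  rw [hset, ENNReal.ofReal_div_of_pos hc, ENNReal.le_div_iff_mul_le (by simp [hc]) (by simp),
    mul_comm]
  calc ENNReal.ofReal c * P _ ≤ ENNReal.ofReal (∫ ω in _, F n ω ∂P) := by
        rw [ENNReal.ofReal_eq_coe_nnreal hc.le]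
        exact hdoob
    _ ≤ ENNReal.ofReal (∫ ω, F n ω ∂P) := ENNReal.ofReal_le_ofReal
        (setIntegral_le_integral (hF.integrable n) (.of_forall (hF_nonneg n)))

namespace ProbabilityTheory

variable {Ω β : Type*} {mΩ : MeasurableSpace Ω} {P : Measure Ω}
  [TopologicalSpace β] [TopologicalSpace.MetrizableSpace β] [MeasurableSpace β] [BorelSpace β]
  {X : ℕ → Ω → β} {g : β → ℝ}

theorem iIndepFun.integrable_prod_range {Y : ℕ → Ω → ℝ} (hY : iIndepFun Y P)
    (hY_meas : ∀ i, Measurable (Y i)) (hY_int : ∀ i, Integrable (Y i) P) (n : ℕ) :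
    Integrable (fun ω => ∏ i ∈ Finset.range n, Y i ω) P := by
  have := hY.isProbabilityMeasure
  induction n with
  | zero => simp
  | succ n ih =>
    simp_rw [Finset.prod_range_succ]
    have hindep := hY.indepFun_prod_range_succ hY_meas n
    rw [Finset.prod_fn] at hindep
    exact hindep.integrable_mul ih (hY_int n)

theorem iIndepFun.martingale_prod_range_succ_comp (hX : ∀ i, StronglyMeasurable (X i))
    (hindep : iIndepFun X P) (hg : Measurable g) (hg_int : ∀ i, Integrable (fun ω => g (X i ω)) P)
    (hg_mean : ∀ i, ∫ ω, g (X i ω) ∂P = 1) :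
    Martingale (fun n ω => ∏ i ∈ Finset.range (n + 1), g (X i ω)) (Filtration.natural X hX) P := by
  have := hindep.isProbabilityMeasure
  set ℱ := Filtration.natural X hX
  set F : ℕ → Ω → ℝ := fun n ω => ∏ i ∈ Finset.range (n + 1), g (X i ω)
  have hF_int : ∀ n, Integrable (F n) P := fun n =>
    (hindep.comp (fun _ => g) (fun _ => hg)).integrable_prod_range
      (fun i => hg.comp (hX i).measurable) hg_int (n + 1)
  have hF_adapted : StronglyAdapted ℱ F := fun n =>
    (Finset.measurable_prod _ fun i hi => hg.comp
      (((Filtration.stronglyAdapted_natural hX) i).mono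
        (ℱ.mono (Nat.lt_succ_iff.mp (Finset.mem_range.mp hi)))).measurable).stronglyMeasurable
  refine martingale_nat hF_adapted hF_int fun n => ?_
  have hF_succ : F (n + 1) = F n * fun ω => g (X (n + 1) ω) := by
    funext ω; exact Finset.prod_range_succ _ _
  have hcond : P[fun ω => g (X (n + 1) ω) | ℱ n] =ᵐ[P] fun _ => (1 : ℝ) := by
    refine (condExp_indep_eq (hX (n + 1)).measurable.comap_le (ℱ.le n)
      (hg.comp (comap_measurable (X (n + 1)))).stronglyMeasurable
      ?_).trans ?_
    · have := indep_iSup_of_disjoint (fun k => (hX k).measurable.comap_le) hindep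
        (S := {n + 1}) (T := {k | k ≤ n}) (by simp)
      rwa [_root_.iSup_singleton] at this
    · exact .of_eq (funext fun _ => hg_mean (n + 1))
  calc F n = F n * fun _ => (1 : ℝ) := (mul_one _).symm
    _ =ᵐ[P] F n * P[fun ω => g (X (n + 1) ω) | ℱ n] := hcond.symm.mul_left
    _ =ᵐ[P] P[F (n + 1) | ℱ n] := by
      rw [hF_succ]
      exact (condExp_mul_of_stronglyMeasurable_left (hF_adapted n)
        (hF_succ ▸ hF_int (n + 1)) (hg_int (n + 1))).symm

theorem iIndepFun.measure_exists_le_prod_range_le (hX : ∀ i, StronglyMeasurable (X i))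
    (hindep : iIndepFun X P) {ν : Measure β} (hlaw : ∀ i, P.map (X i) = ν) (hg : Measurable g)
    (hg_nonneg : 0 ≤ g) (hg_int : Integrable g ν) (hg_mean : ∫ y, g y ∂ν = 1) {c : ℝ}
    (hc : 0 < c) (N : ℕ) :
    P {ω | ∃ n, 0 < n ∧ n ≤ N ∧ c ≤ ∏ i ∈ Finset.range n, g (X i ω)} ≤ ENNReal.ofReal c⁻¹ := by
  have := hindep.isProbabilityMeasure
  have hg_int' (i : ℕ) : Integrable (fun ω => g (X i ω)) P :=
    (integrable_map_measure hg.aestronglyMeasurable (hX i).measurable.aemeasurable).1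
      ((hlaw i).symm ▸ hg_int)
  have hg_mean' (i : ℕ) : ∫ ω, g (X i ω) ∂P = 1 := by
    rw [← integral_map (hX i).measurable.aemeasurable hg.aestronglyMeasurable, hlaw i, hg_mean]
  have hmart := hindep.martingale_prod_range_succ_comp hX hg hg_int' hg_mean'
  obtain _ | M := N
  · simp
  have hint : ∫ ω, ∏ i ∈ Finset.range (M + 1), g (X i ω) ∂P = 1 := by
    have h := hmart.setIntegral_eq (Nat.zero_le M) MeasurableSet.univ
    simp only [setIntegral_univ, zero_add, Finset.prod_range_one] at h
    rw [← h, hg_mean']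
  calc P {ω | ∃ n, 0 < n ∧ n ≤ M + 1 ∧ c ≤ ∏ i ∈ Finset.range n, g (X i ω)}
      ≤ P {ω | ∃ k ≤ M, c ≤ ∏ i ∈ Finset.range (k + 1), g (X i ω)} := by
        refine measure_mono fun ω ⟨n, hn, hnM, hc⟩ => ?_
        obtain ⟨k, rfl⟩ := Nat.exists_eq_succ_of_ne_zero hn.ne'
        exact ⟨k, by omega, hc⟩
    _ ≤ ENNReal.ofReal ((∫ ω, ∏ i ∈ Finset.range (M + 1), g (X i ω) ∂P) / c) :=
        hmart.submartingale.measure_exists_le_le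
          (fun _ _ => Finset.prod_nonneg fun _ _ => hg_nonneg _) hc M
    _ = ENNReal.ofReal c⁻¹ := by rw [hint, one_div]

end ProbabilityTheory

theorem maximal_inequality_lower_general
    (ρ : Measure ℝ)
    (Θ : Set ℝ) (hΘ : Θ = {θ : ℝ | Integrable (fun x => exp (θ * x)) ρ})
    (b b' b'' : ℝ → ℝ)
    (hb : ∀ θ ∈ Θ, b θ = log (∫ x, exp (θ * x) ∂ρ))
    (hb' : ∀ θ ∈ interior Θ, HasDerivAt b (b' θ) θ)
    (hb'' : ∀ θ ∈ interior Θ, HasDerivAt b' (b'' θ) θ)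
    (hbpos : ∀ θ ∈ interior Θ, 0 < b'' θ)
    (Iset : Set ℝ) (hI : Iset = b' '' (interior Θ))
    (kl : ℝ → ℝ → ℝ)
    (hkl : ∀ θ ∈ interior Θ, ∀ θ' ∈ interior Θ,
      kl (b' θ) (b' θ') = b θ' - b θ - b' θ * (θ' - θ))
    (V : ℝ) (hV : 0 < V) (hbV : ∀ θ ∈ interior Θ, b'' θ ≤ V)
    (θ : ℝ) (hθ : θ ∈ interior Θ)
    (ν : Measure ℝ) (hν : ν = ρ.withDensity (fun x => ENNReal.ofReal (exp (θ * x - b θ))))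
    (μ : ℝ) (hμ : μ = b' θ)
    (Ω : Type*) [MeasurableSpace Ω] (P : Measure Ω) [IsProbabilityMeasure P]
    (X : ℕ → Ω → ℝ) (hXmeas : ∀ i, Measurable (X i))
    (hXlaw : ∀ i, Measure.map (X i) P = ν)
    (hXindep : ProbabilityTheory.iIndepFun X P)
    (μhat : ℕ → Ω → ℝ) (hμhat : ∀ s ω, μhat s ω = (∑ i ∈ Finset.range s, X i ω) / s)
    (N₁ N₂ : ℕ) (hN₁ : 1 ≤ N₁)
    (x : ℝ) (hx : x ∈ Iset) (hxμ : x ≤ μ) :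
    P {ω | ∃ n, N₁ ≤ n ∧ n ≤ N₂ ∧ μhat n ω ≤ x} ≤
        ENNReal.ofReal (exp (-(N₁ : ℝ) * kl x μ)) ∧
      P {ω | ∃ n, N₁ ≤ n ∧ n ≤ N₂ ∧ μhat n ω ≤ x} ≤
        ENNReal.ofReal (exp (-(N₁ : ℝ) * (x - μ) ^ 2 / (2 * V))) := by
  subst hI hμ hν
  obtain ⟨θx, hθx, rfl⟩ := hx
  have hΘ_conv : Convex ℝ (interior Θ) := hΘ ▸ (convex_integrableExpSet (X := id)).interior
  have hθx_le : θx ≤ θ :=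
    ((strictMonoOn_of_hasDerivAt_pos hΘ_conv hb'' hbpos).le_iff_le hθx hθ).1 hxμ
  have hkl_eq : kl (b' θx) (b' θ) = b θ - b θx - b' θx * (θ - θx) := hkl θx hθx θ hθ
  have hquad : (b' θx - b' θ) ^ 2 / (2 * V) ≤ kl (b' θx) (b' θ) := by
    rw [hkl_eq, ← neg_sub, neg_sq]
    exact sq_deriv_sub_div_le_of_deriv2_le hΘ_conv hV hb' hb'' (fun u hu => (hbpos u hu).le) hbV
      hθx hθ hθx_le
  have hkl_nonneg : 0 ≤ kl (b' θx) (b' θ) := le_trans (by positivity) hquad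
  have hevent : {ω | ∃ n, N₁ ≤ n ∧ n ≤ N₂ ∧ μhat n ω ≤ b' θx} ⊆ {ω | ∃ n, 0 < n ∧ n ≤ N₂ ∧
      exp (N₁ * kl (b' θx) (b' θ)) ≤ ∏ i ∈ Finset.range n, likelihoodRatio b θ θx (X i ω)} := by
    rintro ω ⟨n, hn₁, hn₂, hmean⟩
    refine ⟨n, by omega, hn₂, ?_⟩
    rw [hkl_eq] at hkl_nonneg ⊢
    exact exp_mul_le_prod_likelihoodRatio hθx_le hkl_nonneg hn₁ (by omega) (hμhat n ω ▸ hmean)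
  have : NeZero ρ := ⟨fun h => IsProbabilityMeasure.ne_zero P <|
    (Measure.map_eq_zero_iff (hXmeas 0).aemeasurable).1 (by rw [hXlaw 0, h, withDensity_zero_left])⟩
  have hθx_int : θx ∈ {θ : ℝ | Integrable (fun x => exp (θ * x)) ρ} := hΘ ▸ interior_subset hθx
  have hmain : P {ω | ∃ n, N₁ ≤ n ∧ n ≤ N₂ ∧ μhat n ω ≤ b' θx} ≤
      ENNReal.ofReal (exp (-(N₁ : ℝ) * kl (b' θx) (b' θ))) := by
    refine (measure_mono hevent).trans ?_
    rw [neg_mul, exp_neg]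
    exact hXindep.measure_exists_le_prod_range_le (fun i => (hXmeas i).stronglyMeasurable) hXlaw
      measurable_likelihoodRatio likelihoodRatio_nonneg (integrable_likelihoodRatio hθx_int)
      (integral_likelihoodRatio hθx_int (hb θx (interior_subset hθx))) (exp_pos _) N₂
  refine ⟨hmain, hmain.trans (ENNReal.ofReal_le_ofReal (exp_le_exp.2 ?_))⟩
  rw [mul_div_assoc, neg_mul, neg_mul, neg_le_neg_iff]
  exact mul_le_mul_of_nonneg_left hquad (Nat.cast_nonneg _)

/-- (Maximal inequality, lower tail.) Let `1 ≤ N₁ ≤ N₂` and `x ∈ I` with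
`x ≤ μ`. Then `P(∃ n, N₁ ≤ n ≤ N₂, μ̂ₙ ≤ x) ≤ exp (-N₁ · kl x μ)` and
`P(∃ n, N₁ ≤ n ≤ N₂, μ̂ₙ ≤ x) ≤ exp (-N₁ (x - μ)² / (2V))`. -/
theorem maximal_inequality_lower
    (ρ : Measure ℝ) [SigmaFinite ρ]
    (Θ : Set ℝ) (hΘ : Θ = {θ : ℝ | Integrable (fun x => exp (θ * x)) ρ})
    (b b' b'' : ℝ → ℝ)
    (hb : ∀ θ ∈ Θ, b θ = log (∫ x, exp (θ * x) ∂ρ))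
    (hb' : ∀ θ ∈ interior Θ, HasDerivAt b (b' θ) θ)
    (hb'' : ∀ θ ∈ interior Θ, HasDerivAt b' (b'' θ) θ)
    (hbpos : ∀ θ ∈ interior Θ, 0 < b'' θ)
    (Iset : Set ℝ) (hI : Iset = b' '' (interior Θ))
    (kl : ℝ → ℝ → ℝ)
    (hkl : ∀ θ ∈ interior Θ, ∀ θ' ∈ interior Θ,
      kl (b' θ) (b' θ') = b θ' - b θ - b' θ * (θ' - θ))
    (V : ℝ) (hV : 0 < V) (hbV : ∀ θ ∈ interior Θ, b'' θ ≤ V)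
    (θ : ℝ) (hθ : θ ∈ interior Θ)
    (ν : Measure ℝ) (hν : ν = ρ.withDensity (fun x => ENNReal.ofReal (exp (θ * x - b θ))))
    (μ : ℝ) (hμ : μ = b' θ)
    (Ω : Type*) [MeasurableSpace Ω] (P : Measure Ω) [IsProbabilityMeasure P]
    (X : ℕ → Ω → ℝ) (hXmeas : ∀ i, Measurable (X i))
    (hXlaw : ∀ i, Measure.map (X i) P = ν)
    (hXindep : ProbabilityTheory.iIndepFun X P)
    (μhat : ℕ → Ω → ℝ) (hμhat : ∀ s ω, μhat s ω = (∑ i ∈ Finset.range s, X i ω) / s)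
    (N₁ N₂ : ℕ) (hN₁ : 1 ≤ N₁) (hN : N₁ ≤ N₂)
    (x : ℝ) (hx : x ∈ Iset) (hxμ : x ≤ μ) :
    P {ω | ∃ n, N₁ ≤ n ∧ n ≤ N₂ ∧ μhat n ω ≤ x} ≤
        ENNReal.ofReal (exp (-(N₁ : ℝ) * kl x μ)) ∧
      P {ω | ∃ n, N₁ ≤ n ∧ n ≤ N₂ ∧ μhat n ω ≤ x} ≤
        ENNReal.ofReal (exp (-(N₁ : ℝ) * (x - μ) ^ 2 / (2 * V))) :=
  maximal_inequality_lower_general ρ Θ hΘ b b' b'' hb hb' hb'' hbpos Iset hI kl hkl V hV hbV θ hθ ν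
    hν μ hμ Ω P X hXmeas hXlaw hXindep μhat hμhat N₁ N₂ hN₁ x hx hxμ
end

section
/- For every δ ∈ (0,1) and every integer K ≥ 1, P(∃ s ∈ ℕ, s ≥ 1, such that μ̂_s ≤ μ and kl(μ̂_s, μ) > log(2Ks²/δ)/s) ≤ δ/K. -/
/-!
Chernoff's bound for the tilted family gives `P(μ̂ₛ ≤ y) ≤ exp (-s kl(y, μ))` for every mean
`y ≤ μ`. Since `kl(·, μ)` decreases on the means below `μ` and is continuous up to the boundary,
the event `{μ̂ₛ ≤ μ, kl(μ̂ₛ, μ) > c}` is, up to the null event `μ̂ₛ ∉ closure I`, either empty or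
contained in `{μ̂ₛ ≤ y}` for the mean `y` with `kl(y, μ) = c`. With `c = log (2Ks²/δ) / s` this
has probability at most `δ / (2Ks²)`, and `∑ 1/s² = π²/6 ≤ 2` turns the union bound over `s`
into `δ / K`.
-/

open MeasureTheory ProbabilityTheory Real Set
open scoped ENNReal

def bregmanDiv (b b' : ℝ → ℝ) (η θ : ℝ) : ℝ := b θ - b η - b' η * (θ - η)

@[simp]
theorem bregmanDiv_self (b b' : ℝ → ℝ) (θ : ℝ) : bregmanDiv b b' θ θ = 0 := by
  simp [bregmanDiv]

theorem hasDerivAt_bregmanDiv {b b' : ℝ → ℝ} {b'' η : ℝ} (θ : ℝ)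
    (hb : HasDerivAt b (b' η) η) (hb' : HasDerivAt b' b'' η) :
    HasDerivAt (fun x => bregmanDiv b b' x θ) (-(b'' * (θ - η))) η := by
  have h : HasDerivAt (fun x => bregmanDiv b b' x θ)
      (0 - b' η - (b'' * (θ - η) + b' η * (0 - 1))) η :=
    ((hasDerivAt_const η (b θ)).sub hb).sub
      (hb'.mul ((hasDerivAt_const η θ).sub (hasDerivAt_id' η)))
  convert h using 1
  ring

theorem antitoneOn_bregmanDiv {S : Set ℝ} (hS : Convex ℝ S) {b b' b'' : ℝ → ℝ}
    (hb : ∀ x ∈ S, HasDerivAt b (b' x) x) (hb' : ∀ x ∈ S, HasDerivAt b' (b'' x) x)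
    (hb'' : ∀ x ∈ S, 0 ≤ b'' x) (θ : ℝ) :
    AntitoneOn (fun x => bregmanDiv b b' x θ) (S ∩ Iic θ) := by
  have hderiv x (hx : x ∈ S) := hasDerivAt_bregmanDiv θ (hb x hx) (hb' x hx)
  refine antitoneOn_of_hasDerivWithinAt_nonpos (hS.inter (convex_Iic θ))
    (fun x hx => (hderiv x hx.1).continuousAt.continuousWithinAt)
    (fun x hx => (hderiv x (interior_subset hx).1).hasDerivWithinAt) fun x hx => ?_
  obtain ⟨hxS, hxθ⟩ := interior_subset hx
  exact neg_nonpos.2 (mul_nonneg (hb'' x hxS) (sub_nonneg.2 hxθ))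

theorem strictMonoOn_of_hasDerivAt_pos_s7 {S : Set ℝ} (hS : Convex ℝ S) {f f' : ℝ → ℝ}
    (hf : ∀ x ∈ S, HasDerivAt f (f' x) x) (hf' : ∀ x ∈ S, 0 < f' x) : StrictMonoOn f S :=
  strictMonoOn_of_hasDerivWithinAt_pos hS (fun x hx => (hf x hx).continuousAt.continuousWithinAt)
    (fun x hx => (hf x (interior_subset hx)).hasDerivWithinAt) fun x hx => hf' x (interior_subset hx)

theorem antitoneOn_left_of_eq_bregmanDiv {S : Set ℝ} (hS : Convex ℝ S) {b b' b'' : ℝ → ℝ}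
    (hb : ∀ x ∈ S, HasDerivAt b (b' x) x) (hb' : ∀ x ∈ S, HasDerivAt b' (b'' x) x)
    (hb'' : ∀ x ∈ S, 0 < b'' x) {kl : ℝ → ℝ → ℝ} {θ : ℝ} (hθ : θ ∈ S)
    (hkl : ∀ η ∈ S, kl (b' η) (b' θ) = bregmanDiv b b' η θ) :
    AntitoneOn (fun y => kl y (b' θ)) (b' '' S ∩ Iic (b' θ)) := by
  have hmono := strictMonoOn_of_hasDerivAt_pos_s7 hS hb' hb''
  rintro _ ⟨⟨η₁, hη₁, rfl⟩, h₁⟩ _ ⟨⟨η₂, hη₂, rfl⟩, h₂⟩ h₁₂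
  simp only [hkl η₁ hη₁, hkl η₂ hη₂]
  exact antitoneOn_bregmanDiv hS hb hb' (fun x hx => (hb'' x hx).le) θ
    ⟨hη₁, (hmono.le_iff_le hη₁ hθ).1 h₁⟩ ⟨hη₂, (hmono.le_iff_le hη₂ hθ).1 h₂⟩
    ((hmono.le_iff_le hη₁ hη₂).1 h₁₂)

theorem exists_eq_and_le_of_lt_of_mem_closure {I : Set ℝ} (hI : Convex ℝ I) {μ : ℝ} (hμ : μ ∈ I)
    {h : ℝ → ℝ} (hanti : AntitoneOn h (I ∩ Iic μ)) (hcont : ContinuousOn h (closure I))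
    {c x : ℝ} (hc : h μ ≤ c) (hx : x ∈ closure I) (hxμ : x ≤ μ) (hcx : c < h x) :
    ∃ y ∈ I, y ≤ μ ∧ h y = c ∧ ∀ z ≤ μ, c < h z → z ≤ y := by
  obtain ⟨y, ⟨hxy, hyμ⟩, rfl⟩ := intermediate_value_Icc' hxμ
    (hcont.mono (hI.closure.ordConnected.out hx (subset_closure hμ))) ⟨hc, hcx.le⟩
  have hxy : x < y := hxy.lt_of_ne (by rintro rfl; exact hcx.false)
  obtain ⟨w, hwy, hwI⟩ := mem_closure_iff.1 hx (Iio y) isOpen_Iio hxy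
  have hyI : y ∈ I := hI.ordConnected.out hwI hμ ⟨hwy.le, hyμ⟩
  refine ⟨y, hyI, hyμ, rfl, fun z hzμ hcz => ?_⟩
  by_contra! hyz
  exact hcz.not_ge (hanti ⟨hyI, hyμ⟩ ⟨hI.ordConnected.out hyI hμ ⟨hyz.le, hzμ⟩, hzμ⟩ hyz.le)

theorem measure_le_and_lt_le {Ω : Type*} [MeasurableSpace Ω] {P : Measure Ω} {Y : Ω → ℝ}
    {I : Set ℝ} (hI : Convex ℝ I) {μ : ℝ} (hμ : μ ∈ I) {h : ℝ → ℝ}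
    (hanti : AntitoneOn h (I ∩ Iic μ)) (hcont : ContinuousOn h (closure I))
    (hY : ∀ᵐ ω ∂P, Y ω ∈ closure I) {F : ℝ → ℝ≥0∞}
    (htail : ∀ y ∈ I, y ≤ μ → P {ω | Y ω ≤ y} ≤ F (h y)) {c : ℝ} (hc : h μ ≤ c) :
    P {ω | Y ω ≤ μ ∧ c < h (Y ω)} ≤ F c := by
  by_cases hex : ∃ x ∈ closure I, x ≤ μ ∧ c < h x
  · obtain ⟨x, hx, hxμ, hcx⟩ := hex
    obtain ⟨y, hyI, hyμ, rfl, hle⟩ :=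
      exists_eq_and_le_of_lt_of_mem_closure hI hμ hanti hcont hc hx hxμ hcx
    exact (measure_mono fun ω hω => hle _ hω.1 hω.2).trans (htail y hyI hyμ)
  · push Not at hex
    rw [measure_mono_null (fun ω hω hωI => (hex (Y ω) hωI hω.1).not_gt hω.2) (ae_iff.1 hY)]
    exact zero_le

theorem Convex.ae_mean_mem {Ω : Type*} [MeasurableSpace Ω] {P : Measure Ω} {C : Set ℝ}
    (hC : Convex ℝ C) {X : ℕ → Ω → ℝ} (hX : ∀ i, ∀ᵐ ω ∂P, X i ω ∈ C) {s : ℕ} (hs : 0 < s) :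
    ∀ᵐ ω ∂P, (∑ i ∈ Finset.range s, X i ω) / s ∈ C := by
  filter_upwards [ae_all_iff.2 hX] with ω hω
  convert hC.centerMass_mem (t := Finset.range s) (w := fun _ => 1) (z := (X · ω))
    (fun _ _ => zero_le_one) (by simpa using hs) (fun i _ => hω i) using 1
  simp [Finset.centerMass, div_eq_inv_mul]

theorem ProbabilityTheory.iIndepFun.measure_mean_le_le {Ω : Type*} [MeasurableSpace Ω]
    {P : Measure Ω} {X : ℕ → Ω → ℝ} (hindep : iIndepFun X P) (hmeas : ∀ i, Measurable (X i))
    {t m : ℝ} (ht : t ≤ 0) (hint : ∀ i, Integrable (fun ω => exp (t * X i ω)) P)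
    (hmgf : ∀ i, mgf (X i) P t = m) {s : ℕ} (hs : 0 < s) (a : ℝ) :
    P.real {ω | (∑ i ∈ Finset.range s, X i ω) / s ≤ a} ≤ (exp (-t * a) * m) ^ s := by
  have := hindep.isProbabilityMeasure
  have hset : {ω | (∑ i ∈ Finset.range s, X i ω) / s ≤ a}
      = {ω | (∑ i ∈ Finset.range s, X i) ω ≤ s * a} := by
    ext ω
    simp [Finset.sum_apply, div_le_iff₀ (by exact_mod_cast hs : (0 : ℝ) < s), mul_comm]
  calc P.real {ω | (∑ i ∈ Finset.range s, X i ω) / s ≤ a}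
      ≤ exp (-t * (s * a)) * mgf (∑ i ∈ Finset.range s, X i) P t := hset ▸
        measure_le_le_exp_mul_mgf _ ht (hindep.integrable_exp_mul_sum hmeas fun i _ => hint i)
    _ = (exp (-t * a) * m) ^ s := by
        rw [hindep.mgf_sum hmeas, Finset.prod_congr rfl fun i _ => hmgf i, Finset.prod_const,
          Finset.card_range, mul_pow, ← exp_nat_mul]
        ring_nf

theorem mgf_sub_eq_exp_sub {Ω : Type*} [MeasurableSpace Ω] {P : Measure Ω}
    [IsProbabilityMeasure P] {Y : Ω → ℝ} (hY : Measurable Y) {ρ : Measure ℝ} {b : ℝ → ℝ}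
    {θ η : ℝ} (hlaw : P.map Y = ρ.withDensity fun x => ENNReal.ofReal (exp (θ * x - b θ)))
    (hη : Integrable (fun x => exp (η * x)) ρ) (hbη : b η = log (∫ x, exp (η * x) ∂ρ)) :
    mgf Y P (η - θ) = exp (b η - b θ) := by
  have : NeZero ρ := ⟨fun h =>
    (Measure.isProbabilityMeasure_map hY.aemeasurable).ne_zero _ (by simpa [h] using hlaw)⟩
  rw [← mgf_id_map hY.aemeasurable, hlaw, mgf,
    integral_withDensity_eq_integral_toReal_smul (by fun_prop)
      (ae_of_all _ fun _ => ENNReal.ofReal_lt_top)]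
  calc ∫ x, (ENNReal.ofReal (exp (θ * x - b θ))).toReal • exp ((η - θ) * id x) ∂ρ
      = ∫ x, exp (-b θ) * exp (η * x) ∂ρ := by
        congr 1 with x
        rw [ENNReal.toReal_ofReal (exp_pos _).le, smul_eq_mul, id, ← exp_add, ← exp_add]
        ring_nf
    _ = exp (b η - b θ) := by
        rw [integral_const_mul, hbη, exp_sub, exp_log (integral_exp_pos hη), exp_neg]
        ring

theorem ProbabilityTheory.iIndepFun.measure_mean_le_le_exp_kl {Ω : Type*} [MeasurableSpace Ω]
    {P : Measure Ω} [IsProbabilityMeasure P] {X : ℕ → Ω → ℝ} (hindep : iIndepFun X P)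
    (hmeas : ∀ i, Measurable (X i)) {ρ : Measure ℝ} {S : Set ℝ} (hS : Convex ℝ S)
    (hint : ∀ η ∈ S, Integrable (fun x => exp (η * x)) ρ) {b b' b'' : ℝ → ℝ}
    (hb : ∀ η ∈ S, b η = log (∫ x, exp (η * x) ∂ρ)) (hb' : ∀ x ∈ S, HasDerivAt b' (b'' x) x)
    (hb'' : ∀ x ∈ S, 0 < b'' x) {kl : ℝ → ℝ → ℝ} {θ : ℝ} (hθ : θ ∈ S)
    (hkl : ∀ η ∈ S, kl (b' η) (b' θ) = bregmanDiv b b' η θ)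
    (hlaw : ∀ i, P.map (X i) = ρ.withDensity fun x => ENNReal.ofReal (exp (θ * x - b θ)))
    {s : ℕ} (hs : 0 < s) {y : ℝ} (hy : y ∈ b' '' S) (hyθ : y ≤ b' θ) :
    P {ω | (∑ i ∈ Finset.range s, X i ω) / s ≤ y} ≤ ENNReal.ofReal (exp (-kl y (b' θ)) ^ s) := by
  obtain ⟨η, hη, rfl⟩ := hy
  have hηθ : η ≤ θ := ((strictMonoOn_of_hasDerivAt_pos_s7 hS hb' hb'').le_iff_le hη hθ).1 hyθ
  have hmgf i : mgf (X i) P (η - θ) = exp (b η - b θ) :=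
    mgf_sub_eq_exp_sub (hmeas i) (hlaw i) (hint η hη) (hb η hη)
  rw [← ofReal_measureReal, hkl η hη]
  refine ENNReal.ofReal_le_ofReal ((hindep.measure_mean_le_le hmeas (sub_nonpos.2 hηθ)
    (fun i => mgf_pos_iff.1 ((hmgf i).symm ▸ exp_pos _)) hmgf hs (b' η)).trans_eq ?_)
  rw [bregmanDiv, ← exp_add]
  ring_nf

theorem exp_neg_log_div_pow {x : ℝ} (hx : 0 < x) {s : ℕ} (hs : s ≠ 0) :
    exp (-(log x / s)) ^ s = x⁻¹ := by
  rw [← exp_nat_mul, mul_neg, mul_div_cancel₀ _ (by exact_mod_cast hs), exp_neg, exp_log hx]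

theorem measure_iUnion_le_of_le_div_sq {Ω : Type*} [MeasurableSpace Ω] {P : Measure Ω}
    {E : ℕ → Set Ω} {a : ℝ} (ha : 0 ≤ a) (hE : ∀ s, P (E s) ≤ ENNReal.ofReal (a / s ^ 2)) :
    P (⋃ s, E s) ≤ ENNReal.ofReal (2 * a) := by
  have hsum : HasSum (fun s : ℕ => a / s ^ 2) (a * (π ^ 2 / 6)) := by
    simpa [div_eq_mul_inv] using hasSum_zeta_two.mul_left a
  refine (measure_iUnion_le E).trans ((ENNReal.tsum_le_tsum hE).trans ?_)
  rw [← ENNReal.ofReal_tsum_of_nonneg (fun _ => by positivity) hsum.summable, hsum.tsum_eq]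
  exact ENNReal.ofReal_le_ofReal
    (by nlinarith [mul_nonneg ha (by nlinarith [pi_lt_d2, pi_pos] : 0 ≤ 12 - π ^ 2)])

theorem prob_ucb_deviation_le_general
    (ρ : Measure ℝ)
    (Θ : Set ℝ) (hΘ : Θ = {θ : ℝ | Integrable (fun x => exp (θ * x)) ρ})
    (b b' b'' : ℝ → ℝ)
    (hb : ∀ θ ∈ Θ, b θ = log (∫ x, exp (θ * x) ∂ρ))
    (hb' : ∀ θ ∈ interior Θ, HasDerivAt b (b' θ) θ)
    (hb'' : ∀ θ ∈ interior Θ, HasDerivAt b' (b'' θ) θ)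
    (hbpos : ∀ θ ∈ interior Θ, 0 < b'' θ)
    (Iset : Set ℝ) (hI : Iset = b' '' (interior Θ))
    (kl : ℝ → ℝ → ℝ)
    (hkl : ∀ θ ∈ interior Θ, ∀ θ' ∈ interior Θ,
      kl (b' θ) (b' θ') = b θ' - b θ - b' θ * (θ' - θ))
    (hklcont : ∀ μ' ∈ Iset, ContinuousOn (fun x => kl x μ') (closure Iset))
    (θ : ℝ) (hθ : θ ∈ interior Θ)
    (ν : Measure ℝ) (hν : ν = ρ.withDensity (fun x => ENNReal.ofReal (exp (θ * x - b θ))))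
    (hsupp : ν (closure Iset)ᶜ = 0)
    (μ : ℝ) (hμ : μ = b' θ)
    (Ω : Type*) [MeasurableSpace Ω] (P : Measure Ω) [IsProbabilityMeasure P]
    (X : ℕ → Ω → ℝ) (hXmeas : ∀ i, Measurable (X i))
    (hXlaw : ∀ i, Measure.map (X i) P = ν)
    (hXindep : ProbabilityTheory.iIndepFun X P)
    (μhat : ℕ → Ω → ℝ) (hμhat : ∀ s ω, μhat s ω = (∑ i ∈ Finset.range s, X i ω) / s)
    (δ : ℝ) (hδ : δ ∈ Set.Ioo (0 : ℝ) 1) (K : ℕ) (hK : 1 ≤ K) :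
    P {ω | ∃ s : ℕ, 1 ≤ s ∧ μhat s ω ≤ μ ∧
        log (2 * K * (s : ℝ) ^ 2 / δ) / s < kl (μhat s ω) μ} ≤
      ENNReal.ofReal (δ / K) := by
  obtain ⟨hδ0, hδ1⟩ := hδ
  subst hI hμ hν
  have hS : Convex ℝ (interior Θ) := by
    rw [show Θ = integrableExpSet id ρ from hΘ]
    exact convex_integrableExpSet.interior
  have hIconv : Convex ℝ (b' '' interior Θ) := (hS.isPreconnected.image b'
    fun x hx => (hb'' x hx).continuousAt.continuousWithinAt).ordConnected.convex
  have hθI : b' θ ∈ b' '' interior Θ := mem_image_of_mem b' hθ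
  have hkl' η (hη : η ∈ interior Θ) : kl (b' η) (b' θ) = bregmanDiv b b' η θ := hkl η hη θ hθ
  have hclosure s (hs : 0 < s) : ∀ᵐ ω ∂P, μhat s ω ∈ closure (b' '' interior Θ) := by
    simpa only [hμhat] using hIconv.closure.ae_mean_mem
      (fun i => ae_of_ae_map (hXmeas i).aemeasurable (hXlaw i ▸ mem_ae_iff.2 hsupp)) hs
  have htail s (hs : 0 < s) y (hy : y ∈ b' '' interior Θ) (hyθ : y ≤ b' θ) :
      P {ω | μhat s ω ≤ y} ≤ ENNReal.ofReal (exp (-kl y (b' θ)) ^ s) := by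
    simpa only [hμhat] using hXindep.measure_mean_le_le_exp_kl hXmeas hS
      (fun η hη => hΘ.subset (interior_subset hη)) (fun η hη => hb η (interior_subset hη))
      hb'' hbpos hθ hkl' hXlaw hs hy hyθ
  have hK' : (1 : ℝ) ≤ K := by exact_mod_cast hK
  rw [ofPred_exists]
  refine (measure_iUnion_le_of_le_div_sq (a := δ / (2 * K)) (by positivity) fun s => ?_).trans_eq
    (by congr 1; field_simp)
  rcases Nat.eq_zero_or_pos s with rfl | hs
  · simp
  have hs' : (1 : ℝ) ≤ s := by exact_mod_cast hs
  refine (measure_mono fun ω hω => hω.2).trans ((measure_le_and_lt_le hIconv hθI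
    (antitoneOn_left_of_eq_bregmanDiv hS hb' hb'' hbpos hθ hkl') (hklcont _ hθI) (hclosure s hs)
    (F := fun v => ENNReal.ofReal (exp (-v) ^ s)) (htail s hs) ?_).trans_eq ?_)
  · rw [hkl' θ hθ, bregmanDiv_self]
    exact div_nonneg (log_nonneg ((one_le_div hδ0).2 (by nlinarith))) (by positivity)
  · rw [exp_neg_log_div_pow (by positivity) hs.ne', inv_div]
    congr 1
    field_simp

/-- For every `δ ∈ (0,1)` and every integer `K ≥ 1`,
`P(∃ s ≥ 1, μ̂ₛ ≤ μ ∧ kl (μ̂ₛ, μ) > log (2Ks²/δ) / s) ≤ δ / K`. -/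
theorem prob_ucb_deviation_le
    (ρ : Measure ℝ) [SigmaFinite ρ]
    (Θ : Set ℝ) (hΘ : Θ = {θ : ℝ | Integrable (fun x => exp (θ * x)) ρ})
    (b b' b'' : ℝ → ℝ)
    (hb : ∀ θ ∈ Θ, b θ = log (∫ x, exp (θ * x) ∂ρ))
    (hb' : ∀ θ ∈ interior Θ, HasDerivAt b (b' θ) θ)
    (hb'' : ∀ θ ∈ interior Θ, HasDerivAt b' (b'' θ) θ)
    (hbpos : ∀ θ ∈ interior Θ, 0 < b'' θ)
    (Iset : Set ℝ) (hI : Iset = b' '' (interior Θ))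
    (kl : ℝ → ℝ → ℝ)
    (hkl : ∀ θ ∈ interior Θ, ∀ θ' ∈ interior Θ,
      kl (b' θ) (b' θ') = b θ' - b θ - b' θ * (θ' - θ))
    (hklcont : ∀ μ' ∈ Iset, ContinuousOn (fun x => kl x μ') (closure Iset))
    (θ : ℝ) (hθ : θ ∈ interior Θ)
    (ν : Measure ℝ) (hν : ν = ρ.withDensity (fun x => ENNReal.ofReal (exp (θ * x - b θ))))
    (hsupp : ν (closure Iset)ᶜ = 0)
    (μ : ℝ) (hμ : μ = b' θ)
    (Ω : Type*) [MeasurableSpace Ω] (P : Measure Ω) [IsProbabilityMeasure P]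
    (X : ℕ → Ω → ℝ) (hXmeas : ∀ i, Measurable (X i))
    (hXlaw : ∀ i, Measure.map (X i) P = ν)
    (hXindep : ProbabilityTheory.iIndepFun X P)
    (μhat : ℕ → Ω → ℝ) (hμhat : ∀ s ω, μhat s ω = (∑ i ∈ Finset.range s, X i ω) / s)
    (δ : ℝ) (hδ : δ ∈ Set.Ioo (0 : ℝ) 1) (K : ℕ) (hK : 1 ≤ K) :
    P {ω | ∃ s : ℕ, 1 ≤ s ∧ μhat s ω ≤ μ ∧
        log (2 * K * (s : ℝ) ^ 2 / δ) / s < kl (μhat s ω) μ} ≤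
      ENNReal.ofReal (δ / K) :=
  prob_ucb_deviation_le_general ρ Θ hΘ b b' b'' hb hb' hb'' hbpos Iset hI kl hkl hklcont θ hθ ν hν
    hsupp μ hμ Ω P X hXmeas hXlaw hXindep μhat hμhat δ hδ K hK
end

section
/- Let K ≥ 2 and let μ = (μ₁,…,μ_K) ∈ I^K with μ₁ > μ_i for all i ≥ 2, and set Δ_i = μ₁ − μ_i. Then sup_{w ∈ P_K, w₁ = 0} inf_{λ ∈ Alt(μ), λ₁ = μ₁} Σ_{i=2}^K (w_i/Δ_i) · kl(μ_i, λ_i) = I*(μ)^{-1}, and the supremum is attained at the weights w_j = (Δ_j/kl(μ_j, μ₁)) / (Σ_{i=2}^K Δ_i/kl(μ_i, μ₁)) for j ≥ 2. -/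
open MeasureTheory Real Set Finset

/-- Let `K ≥ 2` and `μ ∈ I^K` with `μ₁ > μ_i` for all `i ≥ 2`, and
`Δ_i = μ₁ - μ_i`. Then
`sup_{w ∈ P_K, w₁ = 0} inf_{λ ∈ Alt(μ), λ₁ = μ₁} Σ_{i ≥ 2} (w_i / Δ_i) kl(μ_i, λ_i) = I*(μ)⁻¹`,
attained at the weights `w*_j = (Δ_j / kl(μ_j, μ₁)) / (Σ_i Δ_i / kl(μ_i, μ₁))`.
(The index `i0` of `Fin K` plays the role of arm `1`.) -/
theorem sup_inf_transport_eq_inv_Istar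
    (ρ : Measure ℝ) [SigmaFinite ρ]
    (Θ : Set ℝ) (hΘ : Θ = {θ : ℝ | Integrable (fun x => exp (θ * x)) ρ})
    (b b' b'' : ℝ → ℝ)
    (hb : ∀ θ ∈ Θ, b θ = log (∫ x, exp (θ * x) ∂ρ))
    (hb' : ∀ θ ∈ interior Θ, HasDerivAt b (b' θ) θ)
    (hb'' : ∀ θ ∈ interior Θ, HasDerivAt b' (b'' θ) θ)
    (hbpos : ∀ θ ∈ interior Θ, 0 < b'' θ)
    (Iset : Set ℝ) (hI : Iset = b' '' (interior Θ))
    (kl : ℝ → ℝ → ℝ)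
    (hkl : ∀ θ ∈ interior Θ, ∀ θ' ∈ interior Θ,
      kl (b' θ) (b' θ') = b θ' - b θ - b' θ * (θ' - θ))
    (K : ℕ) (hK : 2 ≤ K) (i0 : Fin K) (hi0 : (i0 : ℕ) = 0)
    (μ : Fin K → ℝ) (hμI : ∀ i, μ i ∈ Iset)
    (hbest : ∀ i : Fin K, i ≠ i0 → μ i < μ i0)
    (Δ : Fin K → ℝ) (hΔ : ∀ i, Δ i = μ i0 - μ i)
    (Istar : ℝ)
    (hIstar : Istar = ∑ i ∈ Finset.univ.filter (fun i : Fin K => i ≠ i0),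
      Δ i / kl (μ i) (μ i0))
    (wstar : Fin K → ℝ)
    (hwstar : ∀ j : Fin K,
      wstar j = if j = i0 then 0 else (Δ j / kl (μ j) (μ i0)) / Istar) :
    IsGreatest {m : ℝ | ∃ w : Fin K → ℝ, (∀ j, 0 ≤ w j) ∧ (∀ j, w j ≤ 1) ∧
        (∑ j, w j) = 1 ∧ w i0 = 0 ∧
        m = sInf {v : ℝ | ∃ lam : Fin K → ℝ, (∀ i, lam i ∈ Iset) ∧
          (∃ j : Fin K, j ≠ i0 ∧ lam i0 < lam j) ∧ lam i0 = μ i0 ∧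
          v = ∑ i ∈ Finset.univ.filter (fun i : Fin K => i ≠ i0),
            (w i / Δ i) * kl (μ i) (lam i)}} Istar⁻¹ ∧
      sInf {v : ℝ | ∃ lam : Fin K → ℝ, (∀ i, lam i ∈ Iset) ∧
          (∃ j : Fin K, j ≠ i0 ∧ lam i0 < lam j) ∧ lam i0 = μ i0 ∧
          v = ∑ i ∈ Finset.univ.filter (fun i : Fin K => i ≠ i0),
            (wstar i / Δ i) * kl (μ i) (lam i)} = Istar⁻¹ := by
  -- basic setup
  set T := interior Θ with hT
  have hTopen : IsOpen T := isOpen_interior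
  -- convexity of Θ and T
  have hΘconv : Convex ℝ Θ := by
    rw [hΘ]
    intro x hx y hy a c ha hc hac
    simp only [Set.mem_setOf_eq, smul_eq_mul] at *
    have hmeas : AEStronglyMeasurable (fun t : ℝ => exp ((a * x + c * y) * t)) ρ :=
      (Real.continuous_exp.comp (continuous_const.mul continuous_id)).aestronglyMeasurable
    refine Integrable.mono' ((hx.const_mul a).add (hy.const_mul c)) hmeas ?_
    filter_upwards with t
    rw [Real.norm_eq_abs, abs_of_pos (exp_pos _)]
    have h1 : (a * x + c * y) * t = a * (x * t) + c * (y * t) := by ring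
    rw [h1]
    have := convexOn_exp.2 (Set.mem_univ (x * t)) (Set.mem_univ (y * t)) ha hc hac
    simpa using this
  have hTconv : Convex ℝ T := hΘconv.interior
  -- b' strictly monotone on T
  have hb'cont : ContinuousOn b' T := fun x hx =>
    ((hb'' x hx).differentiableAt.continuousAt).continuousWithinAt
  have hbcont : ContinuousOn b T := fun x hx =>
    ((hb' x hx).differentiableAt.continuousAt).continuousWithinAt
  have hb'mono : StrictMonoOn b' T := by
    refine strictMonoOn_of_deriv_pos hTconv hb'cont ?_
    intro x hx
    rw [hTopen.interior_eq] at hx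
    rw [(hb'' x hx).deriv]
    exact hbpos x hx
  -- the Bregman gap function and its properties
  have hGval : ∀ θ₀ ∈ T, (b θ₀ - b θ₀ - b' θ₀ * (θ₀ - θ₀)) = 0 := by
    intro θ₀ _; ring
  have hGderiv : ∀ θ₀, ∀ s ∈ T,
      HasDerivAt (fun u => b u - b θ₀ - b' θ₀ * (u - θ₀)) (b' s - b' θ₀) s := by
    intro θ₀ s hs
    have h1 : HasDerivAt (fun u : ℝ => b' θ₀ * (u - θ₀)) (b' θ₀) s := by
      simpa using (((hasDerivAt_id s).sub_const θ₀).const_mul (b' θ₀))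
    exact ((hb' s hs).sub_const (b θ₀)).sub h1
  have hGmono : ∀ θ₀ ∈ T, StrictMonoOn (fun u => b u - b θ₀ - b' θ₀ * (u - θ₀)) (T ∩ Ici θ₀) := by
    intro θ₀ hθ₀
    refine strictMonoOn_of_deriv_pos (hTconv.inter (convex_Ici θ₀)) ?_ ?_
    · exact fun x hx => ((hGderiv θ₀ x hx.1).differentiableAt.continuousAt).continuousWithinAt
    · intro x hx
      rw [interior_inter, hTopen.interior_eq, interior_Ici] at hx
      rw [(hGderiv θ₀ x hx.1).deriv]
      have := hb'mono.lt_iff_lt hθ₀ hx.1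
      have hlt : b' θ₀ < b' x := (hb'mono.lt_iff_lt hθ₀ hx.1).2 hx.2
      linarith
  have hGanti : ∀ θ₀ ∈ T, AntitoneOn (fun u => b u - b θ₀ - b' θ₀ * (u - θ₀)) (T ∩ Iic θ₀) := by
    intro θ₀ hθ₀
    refine antitoneOn_of_deriv_nonpos (hTconv.inter (convex_Iic θ₀)) ?_ ?_ ?_
    · exact fun x hx => ((hGderiv θ₀ x hx.1).differentiableAt.continuousAt).continuousWithinAt
    · intro x hx
      rw [interior_inter, hTopen.interior_eq, interior_Iic] at hx
      exact (hGderiv θ₀ x hx.1).differentiableAt.differentiableWithinAt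
    · intro x hx
      rw [interior_inter, hTopen.interior_eq, interior_Iic] at hx
      rw [(hGderiv θ₀ x hx.1).deriv]
      have hle : b' x ≤ b' θ₀ := le_of_lt ((hb'mono.lt_iff_lt hx.1 hθ₀).2 hx.2)
      linarith
  -- key inequalities
  have key_nonneg : ∀ θ₀ ∈ T, ∀ s ∈ T, 0 ≤ b s - b θ₀ - b' θ₀ * (s - θ₀) := by
    intro θ₀ hθ₀ s hs
    rcases le_total θ₀ s with h | h
    · have := (hGmono θ₀ hθ₀).monotoneOn ⟨hθ₀, le_refl θ₀⟩ ⟨hs, h⟩ h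
      linarith [hGval θ₀ hθ₀]
    · have := hGanti θ₀ hθ₀ ⟨hs, h⟩ ⟨hθ₀, le_refl θ₀⟩ h
      simp only at this; linarith [hGval θ₀ hθ₀]
  have key_pos : ∀ θ₀ ∈ T, ∀ s ∈ T, θ₀ < s → 0 < b s - b θ₀ - b' θ₀ * (s - θ₀) := by
    intro θ₀ hθ₀ s hs h
    have := hGmono θ₀ hθ₀ ⟨hθ₀, le_refl θ₀⟩ ⟨hs, le_of_lt h⟩ h
    simp only at this; linarith [hGval θ₀ hθ₀]
  have key_mono : ∀ θ₀ ∈ T, ∀ s ∈ T, ∀ t ∈ T, θ₀ ≤ s → s ≤ t →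
      b s - b θ₀ - b' θ₀ * (s - θ₀) ≤ b t - b θ₀ - b' θ₀ * (t - θ₀) := by
    intro θ₀ hθ₀ s hs t ht h1 h2
    have := (hGmono θ₀ hθ₀).monotoneOn ⟨hs, h1⟩ ⟨ht, le_trans h1 h2⟩ h2
    simpa using this
  -- representation of μ by natural parameters
  have hrep : ∀ i : Fin K, ∃ t, t ∈ T ∧ b' t = μ i := by
    intro i
    have := hμI i
    rw [hI] at this
    obtain ⟨t, ht, hv⟩ := this
    exact ⟨t, ht, hv⟩
  choose θf hθT hθval using hrep
  have hrepI : ∀ x ∈ Iset, ∃ t, t ∈ T ∧ b' t = x := by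
    intro x hx
    rw [hI] at hx
    obtain ⟨t, ht, hv⟩ := hx
    exact ⟨t, ht, hv⟩
  have hθlt : ∀ j : Fin K, j ≠ i0 → θf j < θf i0 := by
    intro j hj
    have := hbest j hj
    rw [← hθval j, ← hθval i0] at this
    exact (hb'mono.lt_iff_lt (hθT j) (hθT i0)).1 this
  -- kl facts
  have hkl_self : ∀ i : Fin K, kl (μ i) (μ i) = 0 := by
    intro i
    rw [← hθval i, hkl _ (hθT i) _ (hθT i)]
    ring
  have hc_pos : ∀ j : Fin K, j ≠ i0 → 0 < kl (μ j) (μ i0) := by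
    intro j hj
    rw [← hθval j, ← hθval i0, hkl _ (hθT j) _ (hθT i0)]
    exact key_pos _ (hθT j) _ (hθT i0) (hθlt j hj)
  have hΔpos : ∀ j : Fin K, j ≠ i0 → 0 < Δ j := by
    intro j hj
    rw [hΔ j]
    linarith [hbest j hj]
  have hkl_nonneg : ∀ i : Fin K, ∀ x ∈ Iset, 0 ≤ kl (μ i) x := by
    intro i x hx
    obtain ⟨t, ht, rfl⟩ := hrepI x hx
    rw [← hθval i, hkl _ (hθT i) _ ht]
    exact key_nonneg _ (hθT i) _ ht
  have hkl_mono : ∀ j : Fin K, j ≠ i0 → ∀ x ∈ Iset, μ i0 < x →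
      kl (μ j) (μ i0) ≤ kl (μ j) x := by
    intro j hj x hx hlt
    obtain ⟨t, ht, rfl⟩ := hrepI x hx
    have hti0 : θf i0 < t := by
      rw [← hθval i0] at hlt
      exact (hb'mono.lt_iff_lt (hθT i0) ht).1 hlt
    rw [← hθval j, ← hθval i0, hkl _ (hθT j) _ (hθT i0), hkl _ (hθT j) _ ht]
    exact key_mono _ (hθT j) _ (hθT i0) _ ht (le_of_lt (hθlt j hj)) (le_of_lt hti0)
  -- nonemptiness of the filter
  have hj1 : ∃ j : Fin K, j ≠ i0 := by
    refine ⟨⟨1, by omega⟩, ?_⟩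
    intro h
    have : ((⟨1, by omega⟩ : Fin K) : ℕ) = (i0 : ℕ) := by rw [h]
    rw [hi0] at this
    simp at this
  obtain ⟨j1, hj1ne⟩ := hj1
  have hfilne : (Finset.univ.filter (fun i : Fin K => i ≠ i0)).Nonempty :=
    ⟨j1, by simp [hj1ne]⟩
  have hIstar_pos : 0 < Istar := by
    rw [hIstar]
    exact Finset.sum_pos (fun i hi => div_pos (hΔpos i (by simpa using hi))
      (hc_pos i (by simpa using hi))) hfilne
  have hIstar_ne : Istar ≠ 0 := ne_of_gt hIstar_pos
  -- bounded below by 0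
  have hbdd : ∀ w : Fin K → ℝ, (∀ j, 0 ≤ w j) →
      ∀ v ∈ {v : ℝ | ∃ lam : Fin K → ℝ, (∀ i, lam i ∈ Iset) ∧
          (∃ j : Fin K, j ≠ i0 ∧ lam i0 < lam j) ∧ lam i0 = μ i0 ∧
          v = ∑ i ∈ Finset.univ.filter (fun i : Fin K => i ≠ i0),
            (w i / Δ i) * kl (μ i) (lam i)}, (0:ℝ) ≤ v := by
    intro w hw v hv
    obtain ⟨lam, hlamI, _, _, rfl⟩ := hv
    refine Finset.sum_nonneg (fun i hi => ?_)
    have hi' : i ≠ i0 := by simpa using hi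
    exact mul_nonneg (div_nonneg (hw i) (le_of_lt (hΔpos i hi'))) (hkl_nonneg i _ (hlamI i))
  -- approximate upper bound on the infimum
  have happrox : ∀ w : Fin K → ℝ, (∀ j, 0 ≤ w j) → ∀ j : Fin K, j ≠ i0 → ∀ ε : ℝ, 0 < ε →
      ∃ v ∈ {v : ℝ | ∃ lam : Fin K → ℝ, (∀ i, lam i ∈ Iset) ∧
          (∃ j : Fin K, j ≠ i0 ∧ lam i0 < lam j) ∧ lam i0 = μ i0 ∧
          v = ∑ i ∈ Finset.univ.filter (fun i : Fin K => i ≠ i0),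
            (w i / Δ i) * kl (μ i) (lam i)},
        v ≤ (w j / Δ j) * kl (μ j) (μ i0) + ε := by
    intro w hw j hj ε hε
    set a := w j / Δ j with ha
    have ha0 : 0 ≤ a := div_nonneg (hw j) (le_of_lt (hΔpos j hj))
    -- continuity of the gap at θf i0
    set F : ℝ → ℝ := fun u => a * (b u - b (θf j) - b' (θf j) * (u - θf j)) with hF
    have hFcont : ContinuousAt F (θf i0) := by
      have hbd : ContinuousAt b (θf i0) := (hb' _ (hθT i0)).differentiableAt.continuousAt
      fun_prop
    rw [Metric.continuousAt_iff] at hFcont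
    obtain ⟨δ₁, hδ₁, hδ⟩ := hFcont ε hε
    obtain ⟨δ₂, hδ₂, hball⟩ := Metric.isOpen_iff.1 hTopen (θf i0) (hθT i0)
    set δ := min δ₁ δ₂ with hδdef
    have hδ0 : 0 < δ := lt_min hδ₁ hδ₂
    set σ := θf i0 + δ / 2 with hσ
    have hσd : dist σ (θf i0) < δ := by
      rw [Real.dist_eq]
      rw [hσ]
      rw [abs_of_pos (by linarith)]
      · linarith
    have hσT : σ ∈ T := hball (by
      rw [Metric.mem_ball]
      exact lt_of_lt_of_le hσd (min_le_right _ _))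
    have hσgt : θf i0 < σ := by rw [hσ]; linarith
    have hσF : F σ < F (θf i0) + ε := by
      have := hδ (lt_of_lt_of_le hσd (min_le_left _ _))
      rw [Real.dist_eq] at this
      have := abs_lt.1 this
      linarith [this.1, this.2]
    -- construct lam
    set lam : Fin K → ℝ := fun i => if i = j then b' σ else μ i with hlam
    have hlami0 : lam i0 = μ i0 := by
      rw [hlam]; simp [Ne.symm hj]
    have hlamj : lam j = b' σ := by rw [hlam]; simp
    have hσI : b' σ ∈ Iset := by rw [hI]; exact ⟨σ, hσT, rfl⟩
    have hlamlt : μ i0 < b' σ := by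
      rw [← hθval i0]
      exact hb'mono (hθT i0) hσT hσgt
    refine ⟨∑ i ∈ Finset.univ.filter (fun i : Fin K => i ≠ i0),
        (w i / Δ i) * kl (μ i) (lam i), ?_, ?_⟩
    · refine ⟨lam, ?_, ⟨j, hj, ?_⟩, hlami0, rfl⟩
      · intro i
        rw [hlam]
        by_cases h : i = j
        · simp [h, hσI]
        · simp [h, hμI i]
      · rw [hlami0, hlamj]; exact hlamlt
    · have hsum : ∑ i ∈ Finset.univ.filter (fun i : Fin K => i ≠ i0),
          (w i / Δ i) * kl (μ i) (lam i) = (w j / Δ j) * kl (μ j) (b' σ) := by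
        refine Finset.sum_eq_single_of_mem j (by simp [hj]) ?_ |>.trans (by rw [hlamj])
        intro i _ hij
        have : lam i = μ i := by rw [hlam]; simp [hij]
        rw [this, hkl_self i, mul_zero]
      rw [hsum]
      have h1 : (w j / Δ j) * kl (μ j) (b' σ) = F σ := by
        rw [hF, ← hθval j, hkl _ (hθT j) _ hσT, ha]
      have h2 : (w j / Δ j) * kl (μ j) (μ i0) = F (θf i0) := by
        rw [hF, ← hθval j, ← hθval i0, hkl _ (hθT j) _ (hθT i0), ha]
      rw [h1, h2]
      exact le_of_lt hσF
  -- upper bound for any admissible w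
  have hub : ∀ w : Fin K → ℝ, (∀ j, 0 ≤ w j) → (∑ j, w j) = 1 → w i0 = 0 →
      sInf {v : ℝ | ∃ lam : Fin K → ℝ, (∀ i, lam i ∈ Iset) ∧
          (∃ j : Fin K, j ≠ i0 ∧ lam i0 < lam j) ∧ lam i0 = μ i0 ∧
          v = ∑ i ∈ Finset.univ.filter (fun i : Fin K => i ≠ i0),
            (w i / Δ i) * kl (μ i) (lam i)} ≤ Istar⁻¹ := by
    intro w hw hsum hzero
    have hBdd : BddBelow {v : ℝ | ∃ lam : Fin K → ℝ, (∀ i, lam i ∈ Iset) ∧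
          (∃ j : Fin K, j ≠ i0 ∧ lam i0 < lam j) ∧ lam i0 = μ i0 ∧
          v = ∑ i ∈ Finset.univ.filter (fun i : Fin K => i ≠ i0),
            (w i / Δ i) * kl (μ i) (lam i)} := ⟨0, fun v hv => hbdd w hw v hv⟩
    have hstep : ∀ j : Fin K, j ≠ i0 →
        sInf {v : ℝ | ∃ lam : Fin K → ℝ, (∀ i, lam i ∈ Iset) ∧
          (∃ j : Fin K, j ≠ i0 ∧ lam i0 < lam j) ∧ lam i0 = μ i0 ∧
          v = ∑ i ∈ Finset.univ.filter (fun i : Fin K => i ≠ i0),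
            (w i / Δ i) * kl (μ i) (lam i)} ≤ (w j / Δ j) * kl (μ j) (μ i0) := by
      intro j hj
      refine le_of_forall_pos_le_add (fun ε hε => ?_)
      obtain ⟨v, hv, hvle⟩ := happrox w hw j hj ε hε
      exact le_trans (csInf_le hBdd hv) hvle
    have hsum' : ∑ i ∈ Finset.univ.filter (fun i : Fin K => i ≠ i0), w i = 1 := by
      rw [Finset.filter_ne']
      have h := Finset.sum_erase_add Finset.univ w (Finset.mem_univ i0)
      rw [hzero, hsum] at h
      linarith
    have hpig : ∃ j : Fin K, j ≠ i0 ∧ (w j / Δ j) * kl (μ j) (μ i0) ≤ Istar⁻¹ := by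
      by_contra hcon
      push_neg at hcon
      have hlt : Istar⁻¹ * Istar < 1 := by
        calc Istar⁻¹ * Istar
            = ∑ i ∈ Finset.univ.filter (fun i : Fin K => i ≠ i0),
                Istar⁻¹ * (Δ i / kl (μ i) (μ i0)) := by rw [hIstar, Finset.mul_sum]
          _ < ∑ i ∈ Finset.univ.filter (fun i : Fin K => i ≠ i0), w i := by
              refine Finset.sum_lt_sum_of_nonempty hfilne (fun i hi => ?_)
              have hi' : i ≠ i0 := by simpa using hi
              have hd : 0 < Δ i / kl (μ i) (μ i0) := div_pos (hΔpos i hi') (hc_pos i hi')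
              have := mul_lt_mul_of_pos_right (hcon i hi') hd
              have heq : (w i / Δ i) * kl (μ i) (μ i0) * (Δ i / kl (μ i) (μ i0)) = w i := by
                have hΔne : Δ i ≠ 0 := ne_of_gt (hΔpos i hi')
                have hcne : kl (μ i) (μ i0) ≠ 0 := ne_of_gt (hc_pos i hi')
                field_simp
                try ring
              linarith [heq ▸ this]
          _ = 1 := hsum'
      rw [inv_mul_cancel₀ hIstar_ne] at hlt
      exact lt_irrefl 1 hlt
    obtain ⟨j, hj, hle⟩ := hpig
    exact le_trans (hstep j hj) hle
    -- properties of wstar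
  have hw0 : ∀ j, 0 ≤ wstar j := by
    intro j
    rw [hwstar j]
    by_cases h : j = i0
    · simp [h]
    · rw [if_neg h]
      exact div_nonneg (div_nonneg (le_of_lt (hΔpos j h)) (le_of_lt (hc_pos j h)))
        (le_of_lt hIstar_pos)
  have hw1 : ∀ j, wstar j ≤ 1 := by
    intro j
    rw [hwstar j]
    by_cases h : j = i0
    · simp [h]
    · rw [if_neg h, div_le_one hIstar_pos, hIstar]
      refine Finset.single_le_sum (f := fun i => Δ i / kl (μ i) (μ i0)) (fun i hi => ?_)
        (Finset.mem_filter.2 ⟨Finset.mem_univ j, h⟩)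
      have hi' : i ≠ i0 := by simpa using hi
      exact le_of_lt (div_pos (hΔpos i hi') (hc_pos i hi'))
  have hz : wstar i0 = 0 := by rw [hwstar i0]; simp
  have hsum1 : (∑ j, wstar j) = 1 := by
    have h := Finset.sum_erase_add Finset.univ wstar (Finset.mem_univ i0)
    rw [hz, add_zero] at h
    rw [← h]
    have h2 : ∑ j ∈ Finset.univ.erase i0, wstar j
        = ∑ j ∈ Finset.univ.erase i0, (Δ j / kl (μ j) (μ i0)) / Istar := by
      refine Finset.sum_congr rfl (fun j hj => ?_)
      have hj' : j ≠ i0 := (Finset.mem_erase.1 hj).1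
      rw [hwstar j, if_neg hj']
    rw [h2, ← Finset.sum_div]
    rw [hIstar, Finset.filter_ne']
    exact div_self (by rw [← Finset.filter_ne', ← hIstar]; exact hIstar_ne)
  -- lower bound for wstar infimum
  have hlow : ∀ v ∈ {v : ℝ | ∃ lam : Fin K → ℝ, (∀ i, lam i ∈ Iset) ∧
          (∃ j : Fin K, j ≠ i0 ∧ lam i0 < lam j) ∧ lam i0 = μ i0 ∧
          v = ∑ i ∈ Finset.univ.filter (fun i : Fin K => i ≠ i0),
            (wstar i / Δ i) * kl (μ i) (lam i)}, Istar⁻¹ ≤ v := by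
    rintro v ⟨lam, hlamI, ⟨j, hj, hlt⟩, hlam0, rfl⟩
    rw [hlam0] at hlt
    have h1 : kl (μ j) (μ i0) ≤ kl (μ j) (lam j) := hkl_mono j hj _ (hlamI j) hlt
    have h2 : (wstar j / Δ j) * kl (μ j) (μ i0) = Istar⁻¹ := by
      rw [hwstar j, if_neg hj]
      have hΔne : Δ j ≠ 0 := ne_of_gt (hΔpos j hj)
      have hcne : kl (μ j) (μ i0) ≠ 0 := ne_of_gt (hc_pos j hj)
      field_simp
      try ring
    have hterm : Istar⁻¹ ≤ (wstar j / Δ j) * kl (μ j) (lam j) := by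
      rw [← h2]
      exact mul_le_mul_of_nonneg_left h1
        (div_nonneg (hw0 j) (le_of_lt (hΔpos j hj)))
    refine le_trans hterm (Finset.single_le_sum
      (f := fun i => wstar i / Δ i * kl (μ i) (lam i)) (fun i hi => ?_)
      (Finset.mem_filter.2 ⟨Finset.mem_univ j, hj⟩))
    have hi' : i ≠ i0 := by simpa using hi
    exact mul_nonneg (div_nonneg (hw0 i) (le_of_lt (hΔpos i hi')))
      (hkl_nonneg i _ (hlamI i))
  have hwinf : sInf {v : ℝ | ∃ lam : Fin K → ℝ, (∀ i, lam i ∈ Iset) ∧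
          (∃ j : Fin K, j ≠ i0 ∧ lam i0 < lam j) ∧ lam i0 = μ i0 ∧
          v = ∑ i ∈ Finset.univ.filter (fun i : Fin K => i ≠ i0),
            (wstar i / Δ i) * kl (μ i) (lam i)} = Istar⁻¹ := by
    obtain ⟨v0, hv0, _⟩ := happrox wstar hw0 j1 hj1ne 1 one_pos
    exact le_antisymm (hub wstar hw0 hsum1 hz) (le_csInf ⟨v0, hv0⟩ hlow)
  refine ⟨⟨⟨wstar, hw0, hw1, hsum1, hz, hwinf.symm⟩, ?_⟩, hwinf⟩
  rintro m ⟨w, h0, _, hs, hzw, rfl⟩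
  exact hub w h0 hs hzw
end

section
/- For all x, y > 0, the infimum defining Φ(x, y) is attained at the unique point λ* = (x μ₁ + y μ_j)/(x + y), which lies in I; that is, Φ(x, y) = x·kl(μ₁, λ*) + y·kl(μ_j, λ*), and this value is strictly smaller than x·kl(μ₁, λ) + y·kl(μ_j, λ) for every λ ∈ I with λ ≠ λ*. -/
open MeasureTheory Real Set

/-- For all `x, y > 0`, the infimum defining `Φ (x, y)` is attained at the
unique point `λ* = (x μ₁ + y μj) / (x + y) ∈ I`: `Φ x y = x · kl μ₁ λ* + y · kl μj λ*`, and
this value is strictly smaller than `x · kl μ₁ λ + y · kl μj λ` for every `λ ∈ I`, `λ ≠ λ*`. -/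
theorem Phi_inf_attained_at_convex_combination
    (ρ : Measure ℝ) [SigmaFinite ρ]
    (Θ : Set ℝ) (hΘ : Θ = {θ : ℝ | Integrable (fun x => exp (θ * x)) ρ})
    (b b' b'' : ℝ → ℝ)
    (hb : ∀ θ ∈ Θ, b θ = log (∫ x, exp (θ * x) ∂ρ))
    (hb' : ∀ θ ∈ interior Θ, HasDerivAt b (b' θ) θ)
    (hb'' : ∀ θ ∈ interior Θ, HasDerivAt b' (b'' θ) θ)
    (hbpos : ∀ θ ∈ interior Θ, 0 < b'' θ)
    (Iset : Set ℝ) (hI : Iset = b' '' (interior Θ))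
    (kl : ℝ → ℝ → ℝ)
    (hkl : ∀ θ ∈ interior Θ, ∀ θ' ∈ interior Θ,
      kl (b' θ) (b' θ') = b θ' - b θ - b' θ * (θ' - θ))
    (μ₁ μj : ℝ) (hμ₁ : μ₁ ∈ Iset) (hμj : μj ∈ Iset) (hlt : μj < μ₁)
    (Φ : ℝ → ℝ → ℝ)
    (hΦ : ∀ x y : ℝ, Φ x y =
      sInf {v : ℝ | ∃ lam ∈ Iset, v = x * kl μ₁ lam + y * kl μj lam})
    (x y : ℝ) (hx : 0 < x) (hy : 0 < y) :
    (x * μ₁ + y * μj) / (x + y) ∈ Iset ∧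
      Φ x y = x * kl μ₁ ((x * μ₁ + y * μj) / (x + y)) +
        y * kl μj ((x * μ₁ + y * μj) / (x + y)) ∧
      ∀ lam ∈ Iset, lam ≠ (x * μ₁ + y * μj) / (x + y) →
        Φ x y < x * kl μ₁ lam + y * kl μj lam := by
  have hxy : (0:ℝ) < x + y := by linarith
  set ls : ℝ := (x * μ₁ + y * μj) / (x + y) with hls
  -- Θ is convex
  have hΘconv : Convex ℝ Θ := by
    rw [hΘ]
    intro θ₁ hθ₁ θ₂ hθ₂ a c ha hc hac
    simp only [Set.mem_setOf_eq] at *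
    have hmeas : AEStronglyMeasurable (fun t => exp ((a • θ₁ + c • θ₂) * t)) ρ :=
      (Real.continuous_exp.comp (continuous_const.mul continuous_id)).aestronglyMeasurable
    refine Integrable.mono' ((hθ₁.const_mul a).add (hθ₂.const_mul c)) hmeas ?_
    refine Filter.Eventually.of_forall fun t => ?_
    rw [Real.norm_eq_abs, abs_of_pos (Real.exp_pos _)]
    have h1 : exp ((a • θ₁ + c • θ₂) * t) = exp (θ₁ * t) ^ a * exp (θ₂ * t) ^ c := by
      rw [← Real.exp_mul, ← Real.exp_mul, ← Real.exp_add]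
      congr 1
      simp [smul_eq_mul]
      ring
    rw [h1]
    exact Real.geom_mean_le_arith_mean2_weighted ha hc (Real.exp_pos _).le
      (Real.exp_pos _).le hac
  have hiconv : Convex ℝ (interior Θ) := hΘconv.interior
  have hii : interior (interior Θ) = interior Θ := isOpen_interior.interior_eq
  -- b' is continuous and strictly monotone on interior Θ
  have hb'cont : ContinuousOn b' (interior Θ) := fun θ hθ =>
    (hb'' θ hθ).continuousAt.continuousWithinAt
  have hb'mono : StrictMonoOn b' (interior Θ) := by
    refine strictMonoOn_of_deriv_pos hiconv hb'cont fun θ hθ => ?_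
    rw [hii] at hθ
    rw [(hb'' θ hθ).deriv]
    exact hbpos θ hθ
  -- Iset is ordConnected
  have hord : Set.OrdConnected Iset := by
    rw [hI]
    exact ((hiconv.isPreconnected).image b' hb'cont).ordConnected
  -- lam* is strictly between μj and μ₁
  have h1 : μj < ls := by
    rw [hls, lt_div_iff₀ hxy]; nlinarith
  have h2 : ls < μ₁ := by
    rw [hls, div_lt_iff₀ hxy]; nlinarith
  have hlsI : ls ∈ Iset := hord.out hμj hμ₁ ⟨h1.le, h2.le⟩
  have hlsI' := hlsI
  -- preimages
  rw [hI] at hμ₁ hμj hlsI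
  obtain ⟨θ₁, hθ₁, hbθ₁⟩ := hμ₁
  obtain ⟨θj, hθj, hbθj⟩ := hμj
  obtain ⟨θs, hθs, hbθs⟩ := hlsI
  -- the objective as a function of θ
  have hkey : ∀ θ ∈ interior Θ, x * kl μ₁ (b' θ) + y * kl μj (b' θ) =
      (x + y) * (b θ - ls * θ) + (x * (μ₁ * θ₁ - b θ₁) + y * (μj * θj - b θj)) := by
    intro θ hθ
    rw [← hbθ₁, ← hbθj, hkl θ₁ hθ₁ θ hθ, hkl θj hθj θ hθ, hbθ₁, hbθj]
    have : (x + y) * ls = x * μ₁ + y * μj := by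
      rw [hls]; field_simp
    linear_combination θ * this
  -- strict minimum of θ ↦ b θ - ls * θ at θs
  have hmin : ∀ θ ∈ interior Θ, θ ≠ θs → b θs - ls * θs < b θ - ls * θ := by
    intro θ hθ hne
    have hderiv : ∀ s ∈ interior Θ, HasDerivAt (fun t => b t - ls * t) (b' s - ls) s :=
      fun s hs => (hb' s hs).sub (by simpa using (hasDerivAt_id s).const_mul ls)
    rcases lt_or_gt_of_ne hne with h | h
    · -- θ < θs : strictly antitone on [θ, θs]
      have hsub : Set.Icc θ θs ⊆ interior Θ := hiconv.ordConnected.out hθ hθs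
      have hanti : StrictAntiOn (fun t => b t - ls * t) (Set.Icc θ θs) := by
        refine strictAntiOn_of_deriv_neg (convex_Icc _ _)
          (fun s hs => ((hderiv s (hsub hs)).continuousAt).continuousWithinAt) fun s hs => ?_
        rw [interior_Icc] at hs
        rw [(hderiv s (hsub (Set.mem_Icc_of_Ioo hs))).deriv]
        have h3 : b' s < b' θs := hb'mono (hsub (Set.mem_Icc_of_Ioo hs)) hθs hs.2
        linarith [hbθs]
      exact hanti (Set.left_mem_Icc.2 h.le) (Set.right_mem_Icc.2 h.le) h
    · -- θs < θ : strictly monotone on [θs, θ]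
      have hsub : Set.Icc θs θ ⊆ interior Θ := hiconv.ordConnected.out hθs hθ
      have hmono : StrictMonoOn (fun t => b t - ls * t) (Set.Icc θs θ) := by
        refine strictMonoOn_of_deriv_pos (convex_Icc _ _)
          (fun s hs => ((hderiv s (hsub hs)).continuousAt).continuousWithinAt) fun s hs => ?_
        rw [interior_Icc] at hs
        rw [(hderiv s (hsub (Set.mem_Icc_of_Ioo hs))).deriv]
        have h3 : b' θs < b' s := hb'mono hθs (hsub (Set.mem_Icc_of_Ioo hs)) hs.1
        linarith [hbθs]
      exact hmono (Set.left_mem_Icc.2 h.le) (Set.right_mem_Icc.2 h.le) h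
  -- the objective value at lam*
  set vstar : ℝ := x * kl μ₁ ls + y * kl μj ls with hvstar
  have hge : ∀ lam ∈ Iset, vstar ≤ x * kl μ₁ lam + y * kl μj lam := by
    intro lam hlam
    rw [hI] at hlam
    obtain ⟨θ, hθ, rfl⟩ := hlam
    rw [hvstar, ← hbθs, hkey θ hθ, hkey θs hθs]
    rcases eq_or_ne θ θs with rfl | hne
    · exact le_rfl
    · have := hmin θ hθ hne
      nlinarith
  have hgt : ∀ lam ∈ Iset, lam ≠ ls → vstar < x * kl μ₁ lam + y * kl μj lam := by
    intro lam hlam hne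
    rw [hI] at hlam
    obtain ⟨θ, hθ, rfl⟩ := hlam
    have hne' : θ ≠ θs := fun h => hne (h ▸ hbθs)
    rw [hvstar, ← hbθs, hkey θ hθ, hkey θs hθs]
    have := hmin θ hθ hne'
    nlinarith
  -- sInf equals vstar
  have hmem : vstar ∈ {v : ℝ | ∃ lam ∈ Iset, v = x * kl μ₁ lam + y * kl μj lam} :=
    ⟨ls, hlsI', rfl⟩
  have hlb : ∀ v ∈ {v : ℝ | ∃ lam ∈ Iset, v = x * kl μ₁ lam + y * kl μj lam}, vstar ≤ v := by
    rintro v ⟨lam, hlam, rfl⟩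
    exact hge lam hlam
  have hΦeq : Φ x y = vstar := by
    rw [hΦ]
    exact le_antisymm (csInf_le ⟨vstar, hlb⟩ hmem) (le_csInf ⟨vstar, hmem⟩ hlb)
  exact ⟨hlsI', hΦeq, fun lam hlam hne => hΦeq ▸ hgt lam hlam hne⟩
end

section
/- For every fixed y ≥ 0, lim_{x→+∞} Φ(x, y) = y · kl(μ_j, μ₁). -/
open MeasureTheory Real Set Filter

/-- For every fixed `y ≥ 0`, `lim_{x → +∞} Φ (x, y) = y · kl μj μ₁`. -/
theorem Phi_tendsto_atTop
    (ρ : Measure ℝ) [SigmaFinite ρ]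
    (Θ : Set ℝ) (hΘ : Θ = {θ : ℝ | Integrable (fun x => exp (θ * x)) ρ})
    (b b' b'' : ℝ → ℝ)
    (hb : ∀ θ ∈ Θ, b θ = log (∫ x, exp (θ * x) ∂ρ))
    (hb' : ∀ θ ∈ interior Θ, HasDerivAt b (b' θ) θ)
    (hb'' : ∀ θ ∈ interior Θ, HasDerivAt b' (b'' θ) θ)
    (hbpos : ∀ θ ∈ interior Θ, 0 < b'' θ)
    (Iset : Set ℝ) (hI : Iset = b' '' (interior Θ))
    (kl : ℝ → ℝ → ℝ)
    (hkl : ∀ θ ∈ interior Θ, ∀ θ' ∈ interior Θ,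
      kl (b' θ) (b' θ') = b θ' - b θ - b' θ * (θ' - θ))
    (μ₁ μj : ℝ) (hμ₁ : μ₁ ∈ Iset) (hμj : μj ∈ Iset) (hlt : μj < μ₁)
    (Φ : ℝ → ℝ → ℝ)
    (hΦ : ∀ x y : ℝ, Φ x y =
      sInf {v : ℝ | ∃ lam ∈ Iset, v = x * kl μ₁ lam + y * kl μj lam})
    (y : ℝ) (hy : 0 ≤ y) :
    Filter.Tendsto (fun x => Φ x y) Filter.atTop (nhds (y * kl μj μ₁)) := by
  -- Convexity of Θ
  have hconvΘ : Convex ℝ Θ := by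
    rw [hΘ]
    intro θ₀ h₀ θ₂ h₂ a c ha hc hac
    simp only [mem_setOf_eq] at h₀ h₂ ⊢
    refine (h₀.add h₂).mono ?_ (Filter.Eventually.of_forall fun x => ?_)
    · exact (Real.continuous_exp.comp (continuous_const.mul continuous_id)).aestronglyMeasurable
    · have hle : (a * θ₀ + c * θ₂) * x ≤ max (θ₀ * x) (θ₂ * x) := by
        rcases le_total (θ₀ * x) (θ₂ * x) with h | h
        · rw [max_eq_right h]
          have he : (a * θ₀ + c * θ₂) * x - θ₂ * x = a * (θ₀ * x - θ₂ * x) := by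
            linear_combination θ₂ * x * hac
          have h2 : 0 ≤ a * (θ₂ * x - θ₀ * x) := mul_nonneg ha (sub_nonneg.mpr h)
          nlinarith [he, h2]
        · rw [max_eq_left h]
          have he : (a * θ₀ + c * θ₂) * x - θ₀ * x = c * (θ₂ * x - θ₀ * x) := by
            linear_combination θ₀ * x * hac
          have h2 : 0 ≤ c * (θ₀ * x - θ₂ * x) := mul_nonneg hc (sub_nonneg.mpr h)
          nlinarith [he, h2]
      have h1 : Real.exp ((a * θ₀ + c * θ₂) * x) ≤ Real.exp (θ₀ * x) + Real.exp (θ₂ * x) := by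
        calc Real.exp ((a * θ₀ + c * θ₂) * x) ≤ Real.exp (max (θ₀ * x) (θ₂ * x)) :=
              Real.exp_le_exp.mpr hle
          _ ≤ Real.exp (θ₀ * x) + Real.exp (θ₂ * x) := by
              rcases le_total (θ₀ * x) (θ₂ * x) with h | h
              · rw [max_eq_right h]; linarith [Real.exp_pos (θ₀ * x)]
              · rw [max_eq_left h]; linarith [Real.exp_pos (θ₂ * x)]
      simp only [Pi.add_apply, smul_eq_mul, Real.norm_eq_abs]
      rw [abs_of_pos (Real.exp_pos _),
        abs_of_pos (add_pos (Real.exp_pos _) (Real.exp_pos _))]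
      exact h1
  have hDopen : IsOpen (interior Θ) := isOpen_interior
  have hDconv : Convex ℝ (interior Θ) := hconvΘ.interior
  -- points realizing the means
  rw [hI] at hμ₁ hμj
  obtain ⟨θ₁, hθ₁, hb1⟩ := hμ₁
  obtain ⟨θj, hθj, hbj⟩ := hμj
  -- b' is strictly monotone on the interior
  have hmono : StrictMonoOn b' (interior Θ) := by
    apply strictMonoOn_of_deriv_pos hDconv
    · exact fun t ht => ((hb'' t ht).continuousAt).continuousWithinAt
    · intro t ht
      rw [hDopen.interior_eq] at ht
      rw [(hb'' t ht).deriv]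
      exact hbpos t ht
  have hθlt : θj < θ₁ := by
    refine (hmono.lt_iff_lt hθj hθ₁).mp ?_
    rw [hb1, hbj]; exact hlt
  -- mean value theorem helper
  have hmvt : ∀ s ∈ interior Θ, ∀ t ∈ interior Θ, s < t →
      ∃ cc ∈ Ioo s t, b t - b s = b' cc * (t - s) := by
    intro s hs t ht hst
    have hIcc : Icc s t ⊆ interior Θ := hDconv.ordConnected.out hs ht
    obtain ⟨cc, hcc, hslope⟩ := exists_hasDerivAt_eq_slope b b' hst
      (fun u hu => ((hb' u (hIcc hu)).continuousAt).continuousWithinAt)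
      (fun u hu => hb' u (hIcc (Ioo_subset_Icc_self hu)))
    refine ⟨cc, hcc, ?_⟩
    rw [hslope, div_mul_cancel₀ _ (sub_ne_zero.mpr hst.ne')]
  -- strict positivity of the Bregman divergence
  have hFpos : ∀ s ∈ interior Θ, ∀ t ∈ interior Θ, s ≠ t →
      0 < b t - b s - b' s * (t - s) := by
    intro s hs t ht hne
    rcases hne.lt_or_gt with h | h
    · obtain ⟨cc, hcc, he⟩ := hmvt s hs t ht h
      have hcD : cc ∈ interior Θ := hDconv.ordConnected.out hs ht ⟨hcc.1.le, hcc.2.le⟩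
      have h2 : b' s < b' cc := hmono hs hcD hcc.1
      nlinarith [sub_pos.mpr h]
    · obtain ⟨cc, hcc, he⟩ := hmvt t ht s hs h
      have hcD : cc ∈ interior Θ := hDconv.ordConnected.out ht hs ⟨hcc.1.le, hcc.2.le⟩
      have h2 : b' cc < b' s := hmono hcD hs hcc.2
      nlinarith [sub_pos.mpr h]
  have hFnonneg : ∀ s ∈ interior Θ, ∀ t ∈ interior Θ, 0 ≤ b t - b s - b' s * (t - s) := by
    intro s hs t ht
    rcases eq_or_ne s t with rfl | hne
    · simp
    · exact (hFpos s hs t ht hne).le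
  -- the two divergence functions, as opaque local constants
  obtain ⟨f, hfdef⟩ : ∃ F : ℝ → ℝ, F = fun t => b t - b θ₁ - b' θ₁ * (t - θ₁) := ⟨_, rfl⟩
  obtain ⟨g, hgdef⟩ : ∃ G : ℝ → ℝ, G = fun t => b t - b θj - b' θj * (t - θj) := ⟨_, rfl⟩
  have hfval : ∀ t, f t = b t - b θ₁ - b' θ₁ * (t - θ₁) := fun t => by rw [hfdef]
  have hgval : ∀ t, g t = b t - b θj - b' θj * (t - θj) := fun t => by rw [hgdef]
  have hf0 : ∀ t ∈ interior Θ, 0 ≤ f t := fun t ht => by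
    rw [hfval]; exact hFnonneg θ₁ hθ₁ t ht
  have hg0 : ∀ t ∈ interior Θ, 0 ≤ g t := fun t ht => by
    rw [hgval]; exact hFnonneg θj hθj t ht
  have hfθ₁ : f θ₁ = 0 := by rw [hfval]; ring
  -- monotonicity of f away from θ₁
  have hmonoR : ∀ w z, θ₁ ≤ w → w < z → w ∈ interior Θ → z ∈ interior Θ → f w ≤ f z := by
    intro w z hw hwz hwD hzD
    obtain ⟨cc, hcc, he⟩ := hmvt w hwD z hzD hwz
    have hcD : cc ∈ interior Θ := hDconv.ordConnected.out hwD hzD ⟨hcc.1.le, hcc.2.le⟩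
    have h2 : b' θ₁ ≤ b' cc := by
      rcases eq_or_lt_of_le hw with rfl | h
      · exact (hmono hθ₁ hcD hcc.1).le
      · exact (hmono hθ₁ hcD (h.trans hcc.1)).le
    rw [hfval, hfval]
    nlinarith [sub_pos.mpr hwz]
  have hmonoL : ∀ w z, z < w → w ≤ θ₁ → z ∈ interior Θ → w ∈ interior Θ → f w ≤ f z := by
    intro w z hzw hw hzD hwD
    obtain ⟨cc, hcc, he⟩ := hmvt z hzD w hwD hzw
    have hcD : cc ∈ interior Θ := hDconv.ordConnected.out hzD hwD ⟨hcc.1.le, hcc.2.le⟩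
    have h2 : b' cc ≤ b' θ₁ := by
      rcases eq_or_lt_of_le hw with rfl | h
      · exact (hmono hcD hθ₁ hcc.2).le
      · exact (hmono hcD hθ₁ (hcc.2.trans h)).le
    rw [hfval, hfval]
    nlinarith [sub_pos.mpr hzw]
  -- rewriting the infimum set
  have hset : ∀ x : ℝ,
      {v : ℝ | ∃ lam ∈ Iset, v = x * kl μ₁ lam + y * kl μj lam}
        = (fun t => x * f t + y * g t) '' (interior Θ) := by
    intro x
    ext v
    simp only [mem_setOf_eq, mem_image, hI]
    constructor
    · rintro ⟨lam, ⟨t, ht, rfl⟩, rfl⟩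
      refine ⟨t, ht, ?_⟩
      rw [← hb1, ← hbj, hkl θ₁ hθ₁ t ht, hkl θj hθj t ht, hfval, hgval]
    · rintro ⟨t, ht, rfl⟩
      refine ⟨b' t, ⟨t, ht, rfl⟩, ?_⟩
      rw [← hb1, ← hbj, hkl θ₁ hθ₁ t ht, hkl θj hθj t ht, hfval, hgval]
  have hklg : kl μj μ₁ = g θ₁ := by
    rw [← hb1, ← hbj, hkl θj hθj θ₁ hθ₁, hgval]
  -- upper bound
  have hub : ∀ x : ℝ, 0 ≤ x → Φ x y ≤ y * g θ₁ := by
    intro x hx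
    rw [hΦ, hset]
    have hbdd : BddBelow ((fun t => x * f t + y * g t) '' (interior Θ)) := by
      refine ⟨0, ?_⟩
      rintro v ⟨t, ht, rfl⟩
      exact add_nonneg (mul_nonneg hx (hf0 t ht)) (mul_nonneg hy (hg0 t ht))
    calc sInf ((fun t => x * f t + y * g t) '' (interior Θ)) ≤ x * f θ₁ + y * g θ₁ :=
          csInf_le hbdd ⟨θ₁, hθ₁, rfl⟩
      _ = y * g θ₁ := by rw [hfθ₁]; ring
  -- main limit
  rw [hklg, Metric.tendsto_atTop]
  intro ε hε
  have hy1 : (0:ℝ) < y + 1 := by linarith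
  obtain ⟨ε₀, hε₀def⟩ : ∃ e : ℝ, e = ε / (2 * (y + 1)) := ⟨_, rfl⟩
  have hε₀ : 0 < ε₀ := by rw [hε₀def]; positivity
  have hgc : ContinuousAt g θ₁ := by
    have h1 : ContinuousAt b θ₁ := (hb' θ₁ hθ₁).continuousAt
    rw [hgdef]
    fun_prop
  obtain ⟨δ', hδ', hgδ⟩ := Metric.continuousAt_iff.mp hgc ε₀ hε₀
  obtain ⟨r, hr, hball⟩ := Metric.isOpen_iff.mp hDopen θ₁ hθ₁
  obtain ⟨δ, hδdef⟩ : ∃ d : ℝ, d = min (r / 2) (δ' / 2) := ⟨_, rfl⟩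
  have hδpos : 0 < δ := by rw [hδdef]; exact lt_min (by linarith) (by linarith)
  have hδr : δ < r := by
    rw [hδdef]; exact lt_of_le_of_lt (min_le_left _ _) (by linarith)
  have hδδ' : δ < δ' := by
    rw [hδdef]; exact lt_of_le_of_lt (min_le_right _ _) (by linarith)
  have hmemp : θ₁ + δ ∈ interior Θ := by
    apply hball
    simp only [Metric.mem_ball, Real.dist_eq]
    rw [show θ₁ + δ - θ₁ = δ by ring, abs_of_pos hδpos]
    exact hδr
  have hmemm : θ₁ - δ ∈ interior Θ := by
    apply hball
    simp only [Metric.mem_ball, Real.dist_eq]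
    rw [show θ₁ - δ - θ₁ = -δ by ring, abs_neg, abs_of_pos hδpos]
    exact hδr
  obtain ⟨c, hcdef⟩ : ∃ cc : ℝ, cc = min (f (θ₁ - δ)) (f (θ₁ + δ)) := ⟨_, rfl⟩
  have hcpos : 0 < c := by
    rw [hcdef]
    apply lt_min
    · have := hFpos θ₁ hθ₁ (θ₁ - δ) hmemm (by intro h; linarith)
      rw [hfval]; linarith
    · have := hFpos θ₁ hθ₁ (θ₁ + δ) hmemp (by intro h; linarith)
      rw [hfval]; linarith
  refine ⟨max 1 (y * g θ₁ / c), fun x hx => ?_⟩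
  have hx1 : (1:ℝ) ≤ x := le_trans (le_max_left _ _) hx
  have hx0 : (0:ℝ) < x := lt_of_lt_of_le one_pos hx1
  have hxc : y * g θ₁ ≤ x * c := by
    rw [← div_le_iff₀ hcpos]
    exact le_trans (le_max_right _ _) hx
  -- lower bound for Φ x y
  have hlb : y * g θ₁ - ε / 2 ≤ Φ x y := by
    rw [hΦ, hset]
    refine le_csInf ⟨x * f θ₁ + y * g θ₁, θ₁, hθ₁, rfl⟩ ?_
    rintro v ⟨t, ht, rfl⟩
    show y * g θ₁ - ε / 2 ≤ x * f t + y * g t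
    by_cases h1 : |t - θ₁| ≤ δ
    · have hdist : dist t θ₁ < δ' := by
        rw [Real.dist_eq]; exact lt_of_le_of_lt h1 hδδ'
      have habs : |g t - g θ₁| < ε₀ := hgδ hdist
      have hsub : g θ₁ - g t ≤ ε₀ := by
        have := (abs_lt.mp habs).1; linarith
      have h2 : 0 ≤ x * f t := mul_nonneg hx0.le (hf0 t ht)
      have h3 : y * (g θ₁ - g t) ≤ y * ε₀ := mul_le_mul_of_nonneg_left hsub hy
      have h4 : y * ε₀ ≤ ε / 2 := by
        have he : ε₀ * (2 * (y + 1)) = ε := by rw [hε₀def]; field_simp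
        nlinarith [hε₀.le]
      linarith [mul_sub y (g θ₁) (g t), h2, h3, h4]
    · push_neg at h1
      have hgt0 : 0 ≤ y * g t := mul_nonneg hy (hg0 t ht)
      rcases lt_abs.mp h1 with h | h
      · -- t > θ₁ + δ
        have hfge : f (θ₁ + δ) ≤ f t := hmonoR (θ₁ + δ) t (by linarith) (by linarith) hmemp ht
        have hcf : c ≤ f t := le_trans (by rw [hcdef]; exact min_le_right _ _) hfge
        have hxf : x * c ≤ x * f t := mul_le_mul_of_nonneg_left hcf hx0.le
        linarith
      · -- t < θ₁ - δ
        have ht' : t < θ₁ - δ := by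
          rw [neg_sub] at h; linarith
        have hfge : f (θ₁ - δ) ≤ f t := hmonoL (θ₁ - δ) t ht' (by linarith) ht hmemm
        have hcf : c ≤ f t := le_trans (by rw [hcdef]; exact min_le_left _ _) hfge
        have hxf : x * c ≤ x * f t := mul_le_mul_of_nonneg_left hcf hx0.le
        linarith
  have hub' : Φ x y ≤ y * g θ₁ := hub x hx0.le
  show dist (Φ x y) (y * g θ₁) < ε
  rw [Real.dist_eq]
  have habs : |Φ x y - y * g θ₁| ≤ ε / 2 := abs_le.mpr ⟨by linarith, by linarith⟩
  linarith
end

section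
/- For all x, y, z in the closure of I with x ≤ y ≤ z and y, z ∈ I: kl(x, z) ≥ kl(x, y) + kl(y, z); in particular, if z − y = ε > 0 and b''(θ) ≤ V on the interior of Θ, then kl(x, z) ≥ kl(x, y) + ε²/(2V). -/
open MeasureTheory Real Set

private lemma convex_exp_integrable (ρ : Measure ℝ) :
    Convex ℝ {θ : ℝ | Integrable (fun x => exp (θ * x)) ρ} := by
  intro θ₁ h₁ θ₂ h₂ a c ha hc hac
  simp only [Set.mem_setOf_eq] at h₁ h₂ ⊢
  have hmeas : AEStronglyMeasurable (fun x : ℝ => exp ((a • θ₁ + c • θ₂) * x)) ρ :=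
    (Real.continuous_exp.comp (continuous_const.mul continuous_id)).aestronglyMeasurable
  refine Integrable.mono' ((h₁.const_mul a).add (h₂.const_mul c)) hmeas ?_
  filter_upwards with t
  have key := Real.geom_mean_le_arith_mean2_weighted ha hc
    (le_of_lt (Real.exp_pos (θ₁ * t))) (le_of_lt (Real.exp_pos (θ₂ * t))) hac
  have h1 : Real.exp (θ₁ * t) ^ a = Real.exp (θ₁ * t * a) := by
    rw [Real.rpow_def_of_pos (Real.exp_pos _), Real.log_exp]
  have h2 : Real.exp (θ₂ * t) ^ c = Real.exp (θ₂ * t * c) := by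
    rw [Real.rpow_def_of_pos (Real.exp_pos _), Real.log_exp]
  rw [h1, h2, ← Real.exp_add] at key
  have heq : (a • θ₁ + c • θ₂) * t = θ₁ * t * a + (θ₂ * t * c) := by
    simp [smul_eq_mul]; ring
  rw [Real.norm_eq_abs, abs_of_pos (Real.exp_pos _), heq]
  exact key

/-- For all `x ∈ closure I` and `y, z ∈ I` with `x ≤ y ≤ z`:
`kl x z ≥ kl x y + kl y z`; in particular, if `z - y = ε > 0` and `b'' ≤ V` on the
interior of `Θ`, then `kl x z ≥ kl x y + ε² / (2V)`. -/
theorem kl_superadditive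
    (ρ : Measure ℝ) [SigmaFinite ρ]
    (Θ : Set ℝ) (hΘ : Θ = {θ : ℝ | Integrable (fun x => exp (θ * x)) ρ})
    (b b' b'' : ℝ → ℝ)
    (hb : ∀ θ ∈ Θ, b θ = log (∫ x, exp (θ * x) ∂ρ))
    (hb' : ∀ θ ∈ interior Θ, HasDerivAt b (b' θ) θ)
    (hb'' : ∀ θ ∈ interior Θ, HasDerivAt b' (b'' θ) θ)
    (hbpos : ∀ θ ∈ interior Θ, 0 < b'' θ)
    (Iset : Set ℝ) (hI : Iset = b' '' (interior Θ))
    (kl : ℝ → ℝ → ℝ)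
    (hkl : ∀ θ ∈ interior Θ, ∀ θ' ∈ interior Θ,
      kl (b' θ) (b' θ') = b θ' - b θ - b' θ * (θ' - θ))
    (hklcont : ∀ μ' ∈ Iset, ContinuousOn (fun x => kl x μ') (closure Iset))
    (V : ℝ) (hV : 0 < V) (hbV : ∀ θ ∈ interior Θ, b'' θ ≤ V)
    (x y z : ℝ) (hx : x ∈ closure Iset) (hy : y ∈ Iset) (hz : z ∈ Iset)
    (hxy : x ≤ y) (hyz : y ≤ z) :
    kl x y + kl y z ≤ kl x z ∧ (y < z → kl x y + (z - y) ^ 2 / (2 * V) ≤ kl x z) := by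
  set S := interior Θ with hS
  have hSopen : IsOpen S := isOpen_interior
  have hSconv : Convex ℝ S := by
    apply Convex.interior
    rw [hΘ]
    exact convex_exp_integrable ρ
  -- b' is strictly monotone on S
  have hb'cont : ContinuousOn b' S := fun t ht =>
    ((hb'' t ht).differentiableAt.continuousAt).continuousWithinAt
  have hmono : StrictMonoOn b' S := by
    apply strictMonoOn_of_deriv_pos hSconv hb'cont
    intro t ht
    rw [hSopen.interior_eq] at ht
    rw [(hb'' t ht).deriv]
    exact hbpos t ht
  -- the superadditivity for means in Iset
  have key : ∀ w ∈ Iset, w ≤ y → kl w y + kl y z ≤ kl w z := by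
    intro w hw hwy
    rw [hI] at hw hy hz
    obtain ⟨θ, hθ, rfl⟩ := hw
    obtain ⟨η, hη, rfl⟩ := hy
    obtain ⟨τ, hτ, rfl⟩ := hz
    have hθη : θ ≤ η := (hmono.le_iff_le hθ hη).mp hwy
    have hητ : η ≤ τ := (hmono.le_iff_le hη hτ).mp hyz
    rw [hkl θ hθ η hη, hkl η hη τ hτ, hkl θ hθ τ hτ]
    have h1 : 0 ≤ b' η - b' θ := by linarith
    nlinarith [mul_nonneg h1 (sub_nonneg.mpr hητ)]
  -- Pinsker-type bound : kl y z ≥ (z-y)^2/(2V)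
  have pinsker : (z - y) ^ 2 / (2 * V) ≤ kl y z := by
    rw [hI] at hy hz
    obtain ⟨η, hη, rfl⟩ := hy
    obtain ⟨τ, hτ, rfl⟩ := hz
    have hητ : η ≤ τ := (hmono.le_iff_le hη hτ).mp hyz
    have hIcc : Icc η τ ⊆ S := hSconv.ordConnected.out hη hτ
    set h : ℝ → ℝ := fun t => b t - b' η * t - (b' t - b' η) ^ 2 / (2 * V) with hh
    have hderiv : ∀ t ∈ S, HasDerivAt h
        (b' t - b' η - 2 * (b' t - b' η) ^ 1 * b'' t / (2 * V)) t := by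
      intro t ht
      exact ((hb' t ht).sub ((hasDerivAt_id t).const_mul (b' η))).sub
        ((((hb'' t ht).sub_const (b' η)).pow 2).div_const (2 * V)) |>.congr_deriv (by ring)
    have hmonoh : MonotoneOn h (Icc η τ) := by
      apply monotoneOn_of_deriv_nonneg (convex_Icc η τ)
      · intro t ht
        exact ((hderiv t (hIcc ht)).differentiableAt.continuousAt).continuousWithinAt
      · intro t ht
        rw [interior_Icc] at ht
        exact ((hderiv t (hIcc (Ioo_subset_Icc_self ht))).differentiableAt).differentiableWithinAt
      · intro t ht
        rw [interior_Icc] at ht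
        have htS : t ∈ S := hIcc (Ioo_subset_Icc_self ht)
        rw [(hderiv t htS).deriv]
        have hg : 0 ≤ b' t - b' η := by
          have := hmono.le_iff_le hη htS |>.mpr (le_of_lt ht.1)
          linarith [(hmono.le_iff_le hη htS).mpr (le_of_lt ht.1)]
        have hbt : 0 < b'' t := hbpos t htS
        have hbtV : b'' t ≤ V := hbV t htS
        have h2V : (0:ℝ) < 2 * V := by linarith
        have hle : 2 * (b' t - b' η) ^ 1 * b'' t / (2 * V) ≤ b' t - b' η := by
          rw [div_le_iff₀ h2V]
          nlinarith
        linarith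
    have := hmonoh (left_mem_Icc.mpr hητ) (right_mem_Icc.mpr hητ) hητ
    rw [hkl η hη τ hτ]
    simp only [hh] at this
    have h0 : (b' η - b' η) ^ 2 / (2 * V) = 0 := by simp
    have hexp : b' η * (τ - η) = b' η * τ - b' η * η := by ring
    linarith
  -- pass to the closure in the first argument
  have main : kl x y + kl y z ≤ kl x z := by
    set s : Set ℝ := Iset ∩ Iic y with hs
    have hxc : x ∈ closure s := by
      rw [Metric.mem_closure_iff]
      intro ε hε
      obtain ⟨w, hw, hdw⟩ := Metric.mem_closure_iff.mp hx ε hε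
      refine ⟨min w y, ⟨?_, min_le_right w y⟩, ?_⟩
      · rcases le_total w y with hwy | hwy
        · rwa [min_eq_left hwy]
        · rwa [min_eq_right hwy]
      · rw [Real.dist_eq] at hdw ⊢
        rcases le_total w x with hwx | hwx
        · have hm : min w y = w := min_eq_left (le_trans hwx hxy)
          rw [hm]; exact hdw
        · have h1 : x ≤ min w y := le_min hwx hxy
          have h2 : min w y ≤ w := min_le_left w y
          rw [abs_of_nonpos (by linarith)]
          rw [abs_of_nonpos (by linarith)] at hdw
          linarith
    have hsub : s ⊆ closure Iset := fun w hw => subset_closure hw.1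
    have hcont : ContinuousWithinAt (fun w => kl w z - kl w y) s x := by
      have h1 := (hklcont z hz).sub (hklcont y hy)
      exact (h1 x hx).mono hsub
    haveI hne : (nhdsWithin x s).NeBot := mem_closure_iff_nhdsWithin_neBot.mp hxc
    have hev : ∀ w ∈ s, kl y z ≤ kl w z - kl w y := by
      intro w hw
      have := key w hw.1 hw.2
      linarith
    have := ge_of_tendsto hcont.tendsto (eventually_nhdsWithin_of_forall hev)
    linarith
  exact ⟨main, fun _ => by linarith⟩
end
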